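/- arXiv:2312.15326 — 10 statements merged into one kernel-verified Lean document; each statement's English description precedes it below -/
import Mathlib

section
/- Let n ≥ 1 and let F₁,…,Fₙ : [0,1] → [0,1] be continuous, strictly increasing functions with Fᵢ(0)=0 and Fᵢ(1)=1 (hungry agents' cumulative value functions). If for every t ∈ {1,…,n−1} all agents have the same t/n-mark (i.e., the unique point zₜ with Fᵢ(zₜ)=t/n is the same for all i), then no connected strongly-proportional allocation exists: for every choice of cut points 0 = x₀ ≤ x₁ ≤ ⋯ ≤ xₙ = 1 and every bijection σ : {1,…,n} → {1,…,n} assigning piece [x_{k−1}, x_k] to agent σ(k), some agent i = σ(k) has Fᵢ(x_k) − Fᵢ(x_{k−1}) ≤ 1/n. -/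
/-! If the first `k` pieces are each worth more than `r` to the agent receiving them, then every
agent values `[0, x_k]` at least `k r`: the receiver of piece `k` values `[0, x_{k+1}]` above
`(k+1) r`, so `x_{k+1}` lies beyond that agent's `(k+1) r`-mark, which is the common one, and hence
beyond everybody's. For `r = 1/n` the last piece would then push its receiver's value of `[0, 1]`
above `1`. -/

open Set

theorem mul_le_apply_of_pieces_gt {ι : Type*} {F : ι → ℝ → ℝ} {n : ℕ} {r : ℝ}
    (hmono : ∀ i, StrictMonoOn (F i) (Icc 0 1)) (h0 : ∀ i, F i 0 = 0)
    (hmarks : ∀ t : ℕ, 0 < t → t < n → ∃ z ∈ Icc (0:ℝ) 1, ∀ i, F i z = t * r)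
    {x : Fin (n+1) → ℝ} (hx : ∀ k, x k ∈ Icc 0 1) (hx0 : x 0 = 0) (k : Fin n)
    (hpieces : ∀ m < k, ∃ j, r < F j (x m.succ) - F j (x m.castSucc)) :
    ∀ i, k * r ≤ F i (x k.castSucc) := by
  obtain ⟨k, hk⟩ := k
  induction k with
  | zero => simp [hx0, h0]
  | succ k ih =>
    intro i
    have hk' : k < n := by omega
    obtain ⟨j, hj⟩ := hpieces ⟨k, hk'⟩ (Fin.mk_lt_mk.2 k.lt_succ_self)
    have hprev := ih hk' (fun m hm => hpieces m (hm.trans (Fin.mk_lt_mk.2 k.lt_succ_self))) j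
    obtain ⟨z, hz, hzr⟩ := hmarks (k + 1) k.succ_pos hk
    have hzx : z < x ⟨k + 1, by omega⟩ := by
      refine ((hmono j).lt_iff_lt hz (hx _)).1 ?_
      rw [hzr j]
      push_cast at hprev ⊢
      change _ < F j (x ⟨k + 1, _⟩) - _ at hj
      linarith
    have := hmono i hz (hx _) hzx
    rw [hzr i] at this
    exact this.le

theorem stmt0_general (n : ℕ) (F : Fin n → ℝ → ℝ)
    (hmono : ∀ i, StrictMonoOn (F i) (Icc 0 1))
    (h0 : ∀ i, F i 0 = 0) (h1 : ∀ i, F i 1 = 1)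
    (hsame : ∀ t : ℕ, 0 < t → t < n →
      ∃ z ∈ Icc (0:ℝ) 1, ∀ i, F i z = (t : ℝ) / (n : ℝ)) :
    ∀ x : Fin (n+1) → ℝ, Monotone x → x 0 = 0 → x (Fin.last n) = 1 →
      ∀ σ : Equiv.Perm (Fin n), ∃ k : Fin n,
        F (σ k) (x k.succ) - F (σ k) (x k.castSucc) ≤ 1 / (n : ℝ) := by
  intro x hx hx0 hx1 σ
  by_contra! hlarge
  cases n with
  | zero => exact zero_ne_one (hx0.symm.trans hx1)
  | succ m =>
    have hxI : ∀ k, x k ∈ Icc (0:ℝ) 1 := fun k =>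
      ⟨hx0 ▸ hx (Fin.zero_le k), hx1 ▸ hx (Fin.le_last k)⟩
    have hmarks : ∀ t : ℕ, 0 < t → t < m + 1 →
        ∃ z ∈ Icc (0:ℝ) 1, ∀ i, F i z = t * (1 / ((m + 1 : ℕ) : ℝ)) := by
      simpa only [mul_one_div] using hsame
    have hbefore := mul_le_apply_of_pieces_gt hmono h0 hmarks hxI hx0 (Fin.last m)
      (fun k _ => ⟨σ k, hlarge k⟩) (σ (Fin.last m))
    have hlast := hlarge (Fin.last m)
    rw [Fin.succ_last, hx1, h1] at hlast
    have hsum : ((Fin.last m : ℕ) : ℝ) * (1 / ((m + 1 : ℕ) : ℝ)) + 1 / ((m + 1 : ℕ) : ℝ) = 1 := by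
      simp only [Fin.val_last]; field_simp; push_cast; ring
    linarith

theorem stmt0 (n : ℕ) (hn : 1 ≤ n) (F : Fin n → ℝ → ℝ)
    (hcont : ∀ i, ContinuousOn (F i) (Icc 0 1))
    (hmono : ∀ i, StrictMonoOn (F i) (Icc 0 1))
    (h0 : ∀ i, F i 0 = 0) (h1 : ∀ i, F i 1 = 1)
    (hsame : ∀ t : ℕ, 0 < t → t < n →
      ∃ z ∈ Icc (0:ℝ) 1, ∀ i, F i z = (t : ℝ) / (n : ℝ)) :
    ∀ x : Fin (n+1) → ℝ, Monotone x → x 0 = 0 → x (Fin.last n) = 1 →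
      ∀ σ : Equiv.Perm (Fin n), ∃ k : Fin n,
        F (σ k) (x k.succ) - F (σ k) (x k.castSucc) ≤ 1 / (n : ℝ) :=
  stmt0_general n F hmono h0 h1 hsame
end

section
/- Let F₁,…,Fₙ : [0,1] → [0,1] be continuous, strictly increasing, with Fᵢ(0)=0 and Fᵢ(1)=1. Suppose there exist distinct agents i, j and t ∈ {1,…,n−1} such that the t/n-mark of agent i differs from the t/n-mark of agent j. Then there exists a connected strongly-proportional allocation: cut points 0 = x₀ ≤ ⋯ ≤ xₙ = 1 and a bijection σ such that F_{σ(k)}(x_k) − F_{σ(k)}(x_{k−1}) > 1/n for every k ∈ {1,…,n}. -/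
/-!
Extending each `F i` by the identity outside `[0, 1]` turns it into an order automorphism `μ i`
of `ℝ`, whose inverse reads off marks. Since two agents' marks differ at some level, the agents
can be listed so that at every level `k / n` the mark of the `k`-th agent is at most that of the
`(k + 1)`-st, strictly at some level `K`. Cutting strictly between these two `K / n`-marks gives
both neighbours more than their share; that slack is passed on cut by cut towards both ends of
the cake, so that every agent receives a piece worth more than `1 / n`.
-/

open Set

namespace StronglyProportional

section Chains

variable {ι β : Type*} [LinearOrder β] {g : ι → ℕ → β} {f : ℕ → ι} {s e : ℕ}

def IsMarkChain (g : ι → ℕ → β) (f : ℕ → ι) (s e : ℕ) : Prop :=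
  ∀ p, s ≤ p → p + 1 < e → g (f p) (p + 1) ≤ g (f (p + 1)) (p + 1)

def HasStrictStep (g : ι → ℕ → β) (f : ℕ → ι) (s e : ℕ) : Prop :=
  ∃ p, s ≤ p ∧ p + 1 < e ∧ g (f p) (p + 1) < g (f (p + 1)) (p + 1)

theorem IsMarkChain.mono_left {s' : ℕ} (h : IsMarkChain g f s e) (hs : s ≤ s') :
    IsMarkChain g f s' e :=
  fun p hp => h p (hs.trans hp)

theorem IsMarkChain.mono_right {e' : ℕ} (h : IsMarkChain g f s e) (he : e' ≤ e) :
    IsMarkChain g f s e' :=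
  fun p hp hpe => h p hp (hpe.trans_le he)

theorem IsMarkChain.update (h : IsMarkChain g f (s + 1) e) (w : ι)
    (hw : s + 1 < e → g w (s + 1) ≤ g (f (s + 1)) (s + 1)) :
    IsMarkChain g (Function.update f s w) s e := by
  intro p hsp hpe
  rcases hsp.eq_or_lt with rfl | hsp
  · simpa [Function.update_of_ne (Nat.succ_ne_self s)] using hw hpe
  · rw [Function.update_of_ne hsp.ne', Function.update_of_ne (by omega)]
    exact h p hsp hpe

theorem HasStrictStep.update (h : HasStrictStep g f (s + 1) e) (w : ι) :
    HasStrictStep g (Function.update f s w) s e := by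
  obtain ⟨p, hsp, hpe, hp⟩ := h
  refine ⟨p, by omega, hpe, ?_⟩
  rwa [Function.update_of_ne (by omega), Function.update_of_ne (by omega)]

variable [DecidableEq ι] {S : Finset ι} {w : ι}

theorem bijOn_update_of_erase (hw : w ∈ S) (hse : s < e)
    (hf : BijOn f (Ico (s + 1) e) ↑(S.erase w)) :
    BijOn (Function.update f s w) (Ico s e) S := by
  have hf' : BijOn (Function.update f s w) (Ico (s + 1) e) ↑(S.erase w) :=
    hf.congr fun p hp => (Function.update_of_ne (Nat.lt_of_succ_le hp.1).ne' ..).symm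
  have := hf'.insert (a := s) (by simp)
  rwa [Function.update_self, ← Finset.coe_insert, Finset.insert_erase hw,
    ← Order.succ_eq_add_one, insert_Ico_succ_left_eq_Ico hse] at this

theorem IsMarkChain.update_of_bijOn (hchain : IsMarkChain g f (s + 1) e)
    (hf : BijOn f (Ico (s + 1) e) ↑(S.erase w)) (hmin : ∀ u ∈ S, g w (s + 1) ≤ g u (s + 1)) :
    IsMarkChain g (Function.update f s w) s e :=
  hchain.update w fun hse => hmin _ (Finset.mem_of_mem_erase (hf.mapsTo ⟨le_rfl, hse⟩))

theorem exists_markChain_head (S : Finset ι) (s : ℕ) (hSe : s + S.card = e) (v : ι)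
    (hv : v ∈ S) (hmin : ∀ u ∈ S, g v (s + 1) ≤ g u (s + 1)) :
    ∃ f, BijOn f (Ico s e) S ∧ f s = v ∧ IsMarkChain g f s e := by
  induction hm : S.card generalizing S s v with
  | zero => simp_all
  | succ m ih =>
    rcases (S.erase v).eq_empty_or_nonempty with hT | hT
    · obtain rfl : S = {v} := by rw [← Finset.insert_erase hv, hT]; rfl
      obtain rfl : e = s + 1 := by simpa using hSe.symm
      refine ⟨fun _ => v, ?_, rfl, fun p hp hpe => le_rfl⟩
      have : Ico s (s + 1) = {s} := by ext; simp only [mem_Ico, mem_singleton_iff]; omega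
      rw [Finset.coe_singleton, this]
      exact bijOn_singleton.2 rfl
    · obtain ⟨v', hv', hmin'⟩ := (S.erase v).exists_min_image (g · (s + 2)) hT
      have hcard : (S.erase v).card = m := by rw [Finset.card_erase_of_mem hv, hm]; rfl
      obtain ⟨f, hf, hfs, hchain⟩ := ih (S.erase v) (s + 1) (by omega) v' hv' hmin' hcard
      exact ⟨_, bijOn_update_of_erase hv (by omega) hf, Function.update_self ..,
        hchain.update_of_bijOn hf hmin⟩

theorem exists_markChain_strict_of_erase_const (hSe : s + S.card = e) (hw : w ∈ S)
    (hmin : ∀ u ∈ S, g w (s + 1) ≤ g u (s + 1)) (hv : ∃ v ∈ S, g w (s + 1) < g v (s + 1))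
    (hconst : ∀ k ∈ Ioo (s + 1) e, ∀ u ∈ S.erase w, ∀ v ∈ S.erase w, g u k = g v k) :
    ∃ f, BijOn f (Ico s e) S ∧ IsMarkChain g f s e ∧ HasStrictStep g f s e := by
  obtain ⟨v, hv, hwv⟩ := hv
  have hvw : v ∈ S.erase w := Finset.mem_erase.2 ⟨fun h => (h ▸ hwv).false, hv⟩
  have hSe' : s + 1 + (S.erase w).card = e := by
    rw [Finset.card_erase_of_mem hw]; have := Finset.card_pos.2 ⟨w, hw⟩; omega
  have hvmin : ∀ u ∈ S.erase w, g v (s + 2) ≤ g u (s + 2) := by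
    intro u hu
    rcases eq_or_ne u v with rfl | huv
    · exact le_rfl
    · have := Finset.one_lt_card.2 ⟨u, hu, v, hvw, huv⟩
      exact (hconst (s + 2) ⟨by omega, by omega⟩ v hvw u hu).le
  obtain ⟨f, hf, hfs, hchain⟩ := exists_markChain_head (S.erase w) (s + 1) hSe' v hvw hvmin
  have hse : s + 1 < e := by
    have := Finset.card_pos.2 ⟨v, hvw⟩; omega
  refine ⟨_, bijOn_update_of_erase hw (by omega) hf, hchain.update_of_bijOn hf hmin,
    s, le_rfl, hse, ?_⟩
  rwa [Function.update_self, Function.update_of_ne (by omega), hfs]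

theorem exists_markChain_strict (S : Finset ι) (s : ℕ) (hSe : s + S.card = e)
    (hdiff : ∃ k ∈ Ioo s e, ∃ u ∈ S, ∃ v ∈ S, g u k ≠ g v k) :
    ∃ f, BijOn f (Ico s e) S ∧ IsMarkChain g f s e ∧ HasStrictStep g f s e := by
  induction hm : S.card generalizing S s with
  | zero => simp_all
  | succ m ih =>
    have hcard {w} (hw : w ∈ S) : (S.erase w).card = m := by
      rw [Finset.card_erase_of_mem hw, hm]; rfl
    have hSe' {w} (hw : w ∈ S) : s + 1 + (S.erase w).card = e := by
      rw [hcard hw]; omega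
    by_cases hconst : ∀ a ∈ S, ∀ b ∈ S, g a (s + 1) = g b (s + 1)
    · -- the marks differ at a later level, so any third agent can go first
      obtain ⟨k, ⟨hsk, hke⟩, u, hu, v, hv, huv⟩ := hdiff
      have hks : s + 1 < k := by
        rcases (Nat.succ_le_of_lt hsk).eq_or_lt with rfl | h
        · exact absurd (hconst u hu v hv) huv
        · exact h
      obtain ⟨j, hj⟩ : ((S.erase u).erase v).Nonempty := by
        rw [← Finset.card_pos, Finset.card_erase_of_mem, Finset.card_erase_of_mem hu]
        · omega
        · exact Finset.mem_erase.2 ⟨fun h => huv (h ▸ rfl), hv⟩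
      have hjS := Finset.mem_of_mem_erase (Finset.mem_of_mem_erase hj)
      have hju :=
        Finset.mem_erase.2 ⟨(Finset.ne_of_mem_erase (Finset.mem_of_mem_erase hj)).symm, hu⟩
      have hjv := Finset.mem_erase.2 ⟨(Finset.ne_of_mem_erase hj).symm, hv⟩
      obtain ⟨f, hf, hchain, hstrict⟩ := ih (S.erase j) (s + 1) (hSe' hjS)
        ⟨k, ⟨hks, hke⟩, u, hju, v, hjv, huv⟩ (hcard hjS)
      exact ⟨_, bijOn_update_of_erase hjS (by omega) hf,
        hchain.update_of_bijOn hf fun b hb => (hconst j hjS b hb).le, hstrict.update j⟩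
    · push Not at hconst
      obtain ⟨w, hw, hmin⟩ := S.exists_min_image (g · (s + 1)) (Finset.card_pos.1 (by omega))
      by_cases hdiff' : ∃ k ∈ Ioo (s + 1) e, ∃ u ∈ S.erase w, ∃ v ∈ S.erase w, g u k ≠ g v k
      · obtain ⟨f, hf, hchain, hstrict⟩ := ih (S.erase w) (s + 1) (hSe' hw) hdiff' (hcard hw)
        exact ⟨_, bijOn_update_of_erase hw (by omega) hf, hchain.update_of_bijOn hf hmin,
          hstrict.update w⟩
      · push Not at hdiff'
        refine exists_markChain_strict_of_erase_const hSe hw hmin ?_ hdiff'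
        obtain ⟨a, ha, b, hb, hab⟩ := hconst
        rcases hab.lt_or_gt with h | h
        · exact ⟨b, hb, (hmin a ha).trans_lt h⟩
        · exact ⟨a, ha, (hmin b hb).trans_lt h⟩

end Chains

theorem exists_orderIso_eqOn_Icc {F : ℝ → ℝ} {a b : ℝ} (hab : a ≤ b)
    (hcont : ContinuousOn F (Icc a b)) (hmono : StrictMonoOn F (Icc a b))
    (ha : F a = a) (hb : F b = b) : ∃ e : ℝ ≃o ℝ, EqOn e F (Icc a b) := by
  classical
  set G : ℝ → ℝ := fun x => if x ∈ Icc a b then F x else x with hG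
  have hGmono : StrictMono G := by
    intro x y hxy
    by_cases hx : x ∈ Icc a b <;> by_cases hy : y ∈ Icc a b <;> simp only [hG, hx, hy, if_true,
      if_false]
    · exact hmono hx hy hxy
    · have hby : b < y := by by_contra! h; exact hy ⟨hx.1.trans hxy.le, h⟩
      linarith [hmono.monotoneOn hx (right_mem_Icc.2 hab) hx.2]
    · have hxa : x < a := by by_contra! h; exact hx ⟨h, hxy.le.trans hy.2⟩
      linarith [hmono.monotoneOn (left_mem_Icc.2 hab) hy hy.1]
    · exact hxy
  have hGsurj : Function.Surjective G := by
    intro z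
    by_cases hz : z ∈ Icc a b
    · obtain ⟨x, hx, hFx⟩ := intermediate_value_Icc hab hcont (by rwa [ha, hb])
      exact ⟨x, by simp only [hG, hx, if_true, hFx]⟩
    · exact ⟨z, by simp only [hG, hz, if_false]⟩
  refine ⟨hGmono.orderIsoOfSurjective G hGsurj, fun x hx => ?_⟩
  simp only [StrictMono.coe_orderIsoOfSurjective, hG, hx, if_true]

section Cuts

variable {ι : Type*} (μ : ι → ℝ ≃o ℝ) (n : ℕ)

noncomputable def mark (i : ι) (k : ℕ) : ℝ := (μ i).symm (k / n)

variable {μ n} {f : ℕ → ι}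

theorem exists_extend_right (h1 : ∀ i, μ i 1 = 1) {K : ℕ} (hf : IsMarkChain (mark μ n) f K n)
    (hK : K < n) (x : ℕ → ℝ) (hx : μ (f K) (x K) < K / n) :
    ∃ x' : ℕ → ℝ, (∀ p ≤ K, x' p = x p) ∧ x' n = 1 ∧
      ∀ p, K ≤ p → p < n → 1 / n < μ (f p) (x' (p + 1)) - μ (f p) (x' p) := by
  rcases (Nat.succ_le_of_lt hK).eq_or_lt with rfl | hKn
  · refine ⟨Function.update x (K + 1) 1, fun p hp => Function.update_of_ne (by omega) ..,
      Function.update_self .., fun p hKp hpn => ?_⟩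
    obtain rfl : K = p := by omega
    have : (K : ℝ) / ↑(K + 1) = 1 - 1 / ↑(K + 1) := by field_simp; push_cast; ring
    rw [Function.update_self, Function.update_of_ne (by omega), h1]
    linarith
  · have hv : μ (f K) (x K) + 1 / n < ((K + 1 : ℕ) : ℝ) / n := by
      push_cast; rw [add_div]; linarith
    obtain ⟨v, hv₁, hv₂⟩ := exists_between hv
    set y := (μ (f K)).symm v
    have hy : μ (f (K + 1)) y < ((K + 1 : ℕ) : ℝ) / n := by
      refine (OrderIso.lt_symm_apply _).1 (lt_of_lt_of_le ?_ (hf K le_rfl hKn))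
      exact (μ (f K)).symm.strictMono hv₂
    obtain ⟨x', hx'le, hx'n, hx'⟩ := exists_extend_right h1 (hf.mono_left K.le_succ) hKn
      (Function.update x (K + 1) y) (by rwa [Function.update_self])
    refine ⟨x', fun p hp => ?_, hx'n, fun p hKp hpn => ?_⟩
    · rw [hx'le p (by omega), Function.update_of_ne (by omega)]
    rcases hKp.eq_or_lt with rfl | hKp
    · rw [hx'le _ le_rfl, hx'le _ K.le_succ, Function.update_self, Function.update_of_ne (by omega),
        OrderIso.apply_symm_apply]
      linarith
    · exact hx' p hKp hpn
termination_by n - K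

theorem exists_extend_left (h0 : ∀ i, μ i 0 = 0) (K : ℕ) (hf : IsMarkChain (mark μ n) f 0 (K + 1))
    (x : ℕ → ℝ) (hx : ((K + 1 : ℕ) : ℝ) / n < μ (f K) (x (K + 1))) :
    ∃ x' : ℕ → ℝ, (∀ p, K + 1 ≤ p → x' p = x p) ∧ x' 0 = 0 ∧
      ∀ p ≤ K, 1 / n < μ (f p) (x' (p + 1)) - μ (f p) (x' p) := by
  induction K generalizing x with
  | zero =>
    refine ⟨Function.update x 0 0, fun p hp => Function.update_of_ne (by omega) ..,
      Function.update_self .., fun p hp => ?_⟩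
    obtain rfl : p = 0 := by omega
    rw [Function.update_self, zero_add, Function.update_of_ne one_ne_zero, h0]
    simpa using hx
  | succ K ih =>
    have hv : ((K + 1 : ℕ) : ℝ) / n < μ (f (K + 1)) (x (K + 2)) - 1 / n := by
      push_cast at hx ⊢; rw [lt_sub_iff_add_lt, ← add_div]; linarith
    obtain ⟨v, hv₁, hv₂⟩ := exists_between hv
    set y := (μ (f (K + 1))).symm v
    have hy : ((K + 1 : ℕ) : ℝ) / n < μ (f K) y := by
      refine (OrderIso.symm_apply_lt _).1 (lt_of_le_of_lt (hf K (Nat.zero_le _) (by omega)) ?_)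
      exact (μ (f (K + 1))).symm.strictMono hv₁
    obtain ⟨x', hx'ge, hx'0, hx'⟩ := ih (hf.mono_right K.succ.le_succ)
      (Function.update x (K + 1) y) (by rwa [Function.update_self])
    refine ⟨x', fun p hp => ?_, hx'0, fun p hp => ?_⟩
    · rw [hx'ge p (by omega), Function.update_of_ne (by omega)]
    rcases hp.eq_or_lt with rfl | hp
    · rw [hx'ge _ le_rfl, hx'ge _ (K + 1).le_succ, Function.update_self,
        Function.update_of_ne (by omega), OrderIso.apply_symm_apply]
      linarith
    · exact hx' p (by omega)

theorem exists_cuts (h0 : ∀ i, μ i 0 = 0) (h1 : ∀ i, μ i 1 = 1)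
    (hf : IsMarkChain (mark μ n) f 0 n)
    (hstrict : HasStrictStep (mark μ n) f 0 n) :
    ∃ x : ℕ → ℝ, x 0 = 0 ∧ x n = 1 ∧ ∀ p < n, 1 / n < μ (f p) (x (p + 1)) - μ (f p) (x p) := by
  obtain ⟨K, -, hKn, hK⟩ := hstrict
  obtain ⟨y, hy₁, hy₂⟩ := exists_between hK
  obtain ⟨x₁, hx₁y, hx₁0, hx₁⟩ := exists_extend_left h0 K (hf.mono_right hKn.le) (fun _ => y)
    ((OrderIso.symm_apply_lt _).1 hy₁)
  obtain ⟨x₂, hx₂x₁, hx₂n, hx₂⟩ := exists_extend_right h1 (hf.mono_left (Nat.zero_le _)) hKn x₁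
    (by rw [hx₁y _ le_rfl]; exact (OrderIso.lt_symm_apply _).1 hy₂)
  refine ⟨x₂, by rw [hx₂x₁ 0 (Nat.zero_le _), hx₁0], hx₂n, fun p hpn => ?_⟩
  rcases le_or_gt p K with hpK | hKp
  · rw [hx₂x₁ p (by omega), hx₂x₁ (p + 1) (by omega)]
    exact hx₁ p hpK
  · exact hx₂ p hKp hpn

end Cuts

end StronglyProportional

open StronglyProportional

theorem stmt1_general (n : ℕ) (F : Fin n → ℝ → ℝ)
    (hcont : ∀ i, ContinuousOn (F i) (Icc 0 1))
    (hmono : ∀ i, StrictMonoOn (F i) (Icc 0 1))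
    (h0 : ∀ i, F i 0 = 0) (h1 : ∀ i, F i 1 = 1)
    (hdiff : ∃ i j : Fin n, i ≠ j ∧ ∃ t : ℕ, 0 < t ∧ t < n ∧
      ∃ zi ∈ Icc (0:ℝ) 1, ∃ zj ∈ Icc (0:ℝ) 1,
        F i zi = (t : ℝ) / (n : ℝ) ∧ F j zj = (t : ℝ) / (n : ℝ) ∧ zi ≠ zj) :
    ∃ x : Fin (n+1) → ℝ, Monotone x ∧ x 0 = 0 ∧ x (Fin.last n) = 1 ∧
      ∃ σ : Equiv.Perm (Fin n), ∀ k : Fin n,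
        1 / (n : ℝ) < F (σ k) (x k.succ) - F (σ k) (x k.castSucc) := by
  choose μ hμ using fun i => exists_orderIso_eqOn_Icc zero_le_one (hcont i) (hmono i) (h0 i) (h1 i)
  obtain ⟨i, j, -, t, ht0, htn, zi, hzi, zj, hzj, hFi, hFj, hne⟩ := hdiff
  have hmark : mark μ n i t ≠ mark μ n j t := by
    rwa [mark, mark, (μ i).symm_apply_eq.2 (by rw [hμ i hzi, hFi]),
      (μ j).symm_apply_eq.2 (by rw [hμ j hzj, hFj])]
  obtain ⟨f, hf, hchain, hstrict⟩ := exists_markChain_strict Finset.univ 0 (by simp)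
    ⟨t, ⟨ht0, htn⟩, i, Finset.mem_univ _, j, Finset.mem_univ _, hmark⟩
  obtain ⟨x, hx0, hxn, hx⟩ := exists_cuts
    (fun i => (hμ i (left_mem_Icc.2 zero_le_one)).trans (h0 i))
    (fun i => (hμ i (right_mem_Icc.2 zero_le_one)).trans (h1 i)) hchain hstrict
  obtain ⟨σ, hσ⟩ : ∃ σ : Equiv.Perm (Fin n), ∀ k, σ k = f k :=
    ⟨Equiv.ofBijective _ (Finite.injective_iff_bijective.1 fun a b hab =>
      Fin.ext (hf.injOn (by simp) (by simp) hab)), fun _ => rfl⟩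
  have hxmono : Monotone fun k : Fin (n + 1) => x k := by
    refine Fin.monotone_iff_le_succ.2 fun k => ((μ (f k)).lt_iff_lt.1 ?_).le
    have := hx k k.isLt
    simp only [Fin.val_succ, Fin.val_castSucc]
    linarith [one_div_nonneg.2 (Nat.cast_nonneg (α := ℝ) n)]
  have hxmem (k : Fin (n + 1)) : x k ∈ Icc (0 : ℝ) 1 :=
    ⟨hx0 ▸ hxmono (Fin.zero_le k), hxn ▸ hxmono (Fin.le_last k)⟩
  refine ⟨fun k => x k, hxmono, hx0, hxn, σ, fun k => ?_⟩
  rw [hσ, ← hμ _ (hxmem _), ← hμ _ (hxmem _)]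
  exact hx k k.isLt

theorem stmt1 (n : ℕ) (hn : 1 ≤ n) (F : Fin n → ℝ → ℝ)
    (hcont : ∀ i, ContinuousOn (F i) (Icc 0 1))
    (hmono : ∀ i, StrictMonoOn (F i) (Icc 0 1))
    (h0 : ∀ i, F i 0 = 0) (h1 : ∀ i, F i 1 = 1)
    (hdiff : ∃ i j : Fin n, i ≠ j ∧ ∃ t : ℕ, 0 < t ∧ t < n ∧
      ∃ zi ∈ Icc (0:ℝ) 1, ∃ zj ∈ Icc (0:ℝ) 1,
        F i zi = (t : ℝ) / (n : ℝ) ∧ F j zj = (t : ℝ) / (n : ℝ) ∧ zi ≠ zj) :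
    ∃ x : Fin (n+1) → ℝ, Monotone x ∧ x 0 = 0 ∧ x (Fin.last n) = 1 ∧
      ∃ σ : Equiv.Perm (Fin n), ∀ k : Fin n,
        1 / (n : ℝ) < F (σ k) (x k.succ) - F (σ k) (x k.castSucc) :=
  stmt1_general n F hcont hmono h0 h1 hdiff
end

section
/- Let F₁,…,Fₙ : [0,1] → [0,1] be continuous, strictly increasing, with Fᵢ(0)=0, Fᵢ(1)=1, and entitlements w₁,…,wₙ > 0 summing to 1. Suppose there is a connected proportional allocation, i.e., cut points 0 = x₀ ≤ ⋯ ≤ xₙ = 1 and a bijection σ with F_{σ(k)}(x_k) − F_{σ(k)}(x_{k−1}) ≥ w_{σ(k)} for all k, in which moreover strict inequality holds for at least one k. Then there exists a connected strongly-proportional allocation: cut points 0 = y₀ ≤ ⋯ ≤ yₙ = 1 with the same bijection σ such that F_{σ(k)}(y_k) − F_{σ(k)}(y_{k−1}) > w_{σ(k)} for all k. -/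
open Set

lemma aux_ivt (f : ℝ → ℝ) {a b : ℝ} (hab : a < b) (hf : ContinuousOn f (Icc a b))
    (v : ℝ) (h1 : f a < v) (h2 : v < f b) : ∃ t, a < t ∧ t < b ∧ f t = v := by
  obtain ⟨t, ht, hft⟩ := intermediate_value_Icc hab.le hf ⟨h1.le, h2.le⟩
  refine ⟨t, ?_, ?_, hft⟩
  · rcases eq_or_lt_of_le ht.1 with h | h
    · exfalso; rw [← h] at hft; exact h1.ne hft
    · exact h
  · rcases eq_or_lt_of_le ht.2 with h | h
    · exfalso; rw [h] at hft; exact h2.ne hft.symm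
    · exact h

lemma aux_pick_gt (f : ℝ → ℝ) {a b : ℝ} (hab : a < b) (hf : ContinuousOn f (Icc a b))
    (hfab : f a < f b) (c : ℝ) (hc : c < f b) : ∃ t, a < t ∧ t < b ∧ c < f t := by
  have hM : max c (f a) < f b := max_lt hc hfab
  have hMa : f a ≤ max c (f a) := le_max_right _ _
  have hMc : c ≤ max c (f a) := le_max_left _ _
  obtain ⟨t, h1, h2, h3⟩ := aux_ivt f hab hf ((max c (f a) + f b) / 2)
    (by linarith) (by linarith)
  exact ⟨t, h1, h2, by linarith⟩

lemma aux_pick_lt (f : ℝ → ℝ) {a b : ℝ} (hab : a < b) (hf : ContinuousOn f (Icc a b))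
    (hfab : f a < f b) (c : ℝ) (hc : f a < c) : ∃ t, a < t ∧ t < b ∧ f t < c := by
  have hM : f a < min c (f b) := lt_min hc hfab
  have hMb : min c (f b) ≤ f b := min_le_right _ _
  have hMc : min c (f b) ≤ c := min_le_left _ _
  obtain ⟨t, h1, h2, h3⟩ := aux_ivt f hab hf ((f a + min c (f b)) / 2)
    (by linarith) (by linarith)
  exact ⟨t, h1, h2, by linarith⟩

lemma aux_natMain (n : ℕ) (G : ℕ → ℝ → ℝ) (W X : ℕ → ℝ)
    (hGc : ∀ k, k < n → ContinuousOn (G k) (Icc 0 1))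
    (hGm : ∀ k, k < n → StrictMonoOn (G k) (Icc 0 1))
    (hp : ∀ k, k < n → W k ≤ G k (X (k+1)) - G k (X k))
    (hXb : ∀ k, k ≤ n → 0 ≤ X k ∧ X k ≤ 1)
    (hXlt : ∀ k, k < n → X k < X (k+1))
    (K : ℕ) (hK : K < n)
    (hs : W K < G K (X (K+1)) - G K (X K)) :
    ∃ z : ℕ → ℝ, z 0 = X 0 ∧ z n = X n ∧ (∀ k, k < n → z k < z (k+1)) ∧
      (∀ k, k < n → W k < G k (z (k+1)) - G k (z k)) := by
  -- membership helper
  have hmem : ∀ k, k ≤ n → X k ∈ Icc (0:ℝ) 1 := fun k hk => ⟨(hXb k hk).1, (hXb k hk).2⟩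
  -- strict mono on values of G applied to X points
  have hGX : ∀ k, k < n → ∀ a b : ℝ, a ∈ Icc (0:ℝ) 1 → b ∈ Icc (0:ℝ) 1 → a < b →
      G k a < G k b := fun k hk a b ha hb hab => hGm k hk ha hb hab
  -- continuity on subintervals
  have hGsub : ∀ k, k < n → ∀ a b : ℝ, 0 ≤ a → b ≤ 1 → ContinuousOn (G k) (Icc a b) :=
    fun k hk a b ha hb => (hGc k hk).mono (Icc_subset_Icc ha hb)
  -- RIGHT STAGE
  have right : ∀ d, K + d ≤ n - 1 → ∃ z : ℕ → ℝ,
      (∀ k, k ≤ K → z k = X k) ∧ (∀ k, K + d < k → z k = X k) ∧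
      (∀ k, z k ≤ X k) ∧ (∀ k, K < k → k ≤ K + d → X (k-1) < z k) ∧
      (∀ k, k ≤ n → 0 ≤ z k ∧ z k ≤ 1) ∧
      (∀ k, K ≤ k → k ≤ K + d → W k < G k (z (k+1)) - G k (z k)) := by
    intro d
    induction d with
    | zero =>
      intro _
      refine ⟨X, fun k _ => rfl, fun k _ => rfl, fun k => le_refl _, ?_, hXb, ?_⟩
      · intro k h1 h2; omega
      · intro k h1 h2
        have : k = K := by omega
        subst this; simpa using hs
    | succ d ih =>
      intro hd
      obtain ⟨z, R1, R2, R3, R4, R6, R7⟩ := ih (by omega)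
      set m := K + d with hm
      have hmn : m + 1 < n := by omega
      have hmn' : m < n := by omega
      -- pick t slightly below X (m+1)
      have hz1 : z (m+1) = X (m+1) := R2 (m+1) (by omega)
      have h7 : W m < G m (X (m+1)) - G m (z m) := by
        have := R7 m (by omega) (by omega); rwa [hz1] at this
      have hab : X m < X (m+1) := hXlt m hmn'
      have hfab : G m (X m) < G m (X (m+1)) :=
        hGX m hmn' _ _ (hmem m (by omega)) (hmem (m+1) (by omega)) hab
      have hzmle : z m ≤ X m := R3 m
      have hzmem : z m ∈ Icc (0:ℝ) 1 := ⟨(R6 m (by omega)).1, (R6 m (by omega)).2⟩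
      obtain ⟨t, ht1, ht2, ht3⟩ := aux_pick_gt (G m) hab
        (hGsub m hmn' _ _ (hXb m (by omega)).1 (hXb (m+1) (by omega)).2)
        hfab (W m + G m (z m)) (by linarith)
      have htmem : t ∈ Icc (0:ℝ) 1 :=
        ⟨le_trans (hXb m (by omega)).1 ht1.le, le_trans ht2.le (hXb (m+1) (by omega)).2⟩
      refine ⟨Function.update z (m+1) t, ?_, ?_, ?_, ?_, ?_, ?_⟩
      · intro k hk
        rw [Function.update_of_ne (by omega : k ≠ m+1)]; exact R1 k hk
      · intro k hk
        rw [Function.update_of_ne (by omega : k ≠ m+1)]; exact R2 k (by omega)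
      · intro k
        rcases eq_or_ne k (m+1) with h | h
        · subst h; rw [Function.update_self]; exact ht2.le
        · rw [Function.update_of_ne h]; exact R3 k
      · intro k hk1 hk2
        rcases eq_or_ne k (m+1) with h | h
        · subst h; rw [Function.update_self]
          simpa using ht1
        · rw [Function.update_of_ne h]; exact R4 k hk1 (by omega)
      · intro k hk
        rcases eq_or_ne k (m+1) with h | h
        · subst h; rw [Function.update_self]; exact ⟨htmem.1, htmem.2⟩
        · rw [Function.update_of_ne h]; exact R6 k hk
      · intro k hk1 hk2
        rcases eq_or_ne k (m+1) with h | h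
        · -- new frontier piece
          subst h
          rw [Function.update_self, Function.update_of_ne (by omega : m+1+1 ≠ m+1)]
          rw [R2 (m+1+1) (by omega)]
          have h1 : G (m+1) t < G (m+1) (X (m+1)) :=
            hGX (m+1) hmn _ _ htmem (hmem (m+1) (by omega)) ht2
          have h2 := hp (m+1) hmn
          linarith
        · rcases eq_or_ne k m with h' | h'
          · subst h'
            rw [Function.update_self, Function.update_of_ne h]
            linarith
          · rw [Function.update_of_ne h, Function.update_of_ne (by omega : k+1 ≠ m+1)]
            exact R7 k hk1 (by omega)
  -- instantiate right stage at the full range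
  obtain ⟨y, hy1, hy2, hy3, hy4, hy6, hy7⟩ := right (n - 1 - K) (by omega)
  rw [show K + (n - 1 - K) = n - 1 by omega] at hy2 hy4 hy7
  have ystep : ∀ k, k < n → y k < y (k+1) := by
    intro k hk
    have hyk : y k ≤ X k := hy3 k
    have : X k < y (k+1) := by
      by_cases h : K < k + 1 ∧ k + 1 ≤ n - 1
      · have := hy4 (k+1) h.1 h.2; simpa using this
      · have he : y (k+1) = X (k+1) := by
          rcases Nat.lt_or_ge K (k+1) with h' | h'
          · exact hy2 (k+1) (by omega)
          · exact hy1 (k+1) (by omega)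
        rw [he]; exact hXlt k hk
    linarith
  have ypieces : ∀ k, K ≤ k → k < n → W k < G k (y (k+1)) - G k (y k) :=
    fun k h1 h2 => hy7 k h1 (by omega)
  -- LEFT STAGE
  have left : ∀ d, d ≤ K → ∃ z : ℕ → ℝ,
      (∀ k, k ≤ K - d → z k = X k) ∧ (∀ k, K < k → z k = y k) ∧
      (∀ k, K - d < k → k ≤ K → X k < z k ∧ z k < X (k+1)) ∧
      (∀ k, k ≤ n → 0 ≤ z k ∧ z k ≤ 1) ∧
      (∀ k, k < n → z k < z (k+1)) ∧
      (∀ k, K - d ≤ k → k < n → W k < G k (z (k+1)) - G k (z k)) := by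
    intro d
    induction d with
    | zero =>
      intro _
      refine ⟨y, fun k hk => hy1 k (by omega), fun k hk => rfl, ?_, hy6, ystep, ?_⟩
      · intro k h1 h2; omega
      · intro k h1 h2; exact ypieces k (by omega) h2
    | succ d ih =>
      intro hd
      obtain ⟨z, L1, L2, L3, L6, L5, L7⟩ := ih (by omega)
      set m := K - d with hm
      have hm1 : 1 ≤ m := by omega
      have hmK : m ≤ K := by omega
      have hmn : m < n := by omega
      have hzm : z m = X m := L1 m (le_refl _)
      have hstep : z m < z (m+1) := L5 m hmn
      have h7 : W m < G m (z (m+1)) - G m (z m) := L7 m (le_refl _) hmn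
      have hzb : ∀ k, k ≤ n → z k ∈ Icc (0:ℝ) 1 := fun k hk => ⟨(L6 k hk).1, (L6 k hk).2⟩
      have hab : X m < min (z (m+1)) (X (m+1)) := by
        refine lt_min ?_ (hXlt m hmn)
        rw [← hzm]; exact hstep
      have hbmem : min (z (m+1)) (X (m+1)) ∈ Icc (0:ℝ) 1 := by
        constructor
        · exact le_trans (hXb m (by omega)).1 hab.le
        · exact le_trans (min_le_right _ _) (hXb (m+1) (by omega)).2
      have hfab : G m (X m) < G m (min (z (m+1)) (X (m+1))) :=
        hGX m hmn _ _ (hmem m (by omega)) hbmem hab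
      obtain ⟨t, ht1, ht2, ht3⟩ := aux_pick_lt (G m) hab
        (hGsub m hmn _ _ (hXb m (by omega)).1 hbmem.2)
        hfab (G m (z (m+1)) - W m) (by rw [← hzm] at *; linarith)
      have ht2' : t < z (m+1) := lt_of_lt_of_le ht2 (min_le_left _ _)
      have ht2'' : t < X (m+1) := lt_of_lt_of_le ht2 (min_le_right _ _)
      have htmem : t ∈ Icc (0:ℝ) 1 :=
        ⟨le_trans (hXb m (by omega)).1 ht1.le, le_trans ht2''.le (hXb (m+1) (by omega)).2⟩
      have hKd : K - (d+1) = m - 1 := by omega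
      rw [hKd]
      refine ⟨Function.update z m t, ?_, ?_, ?_, ?_, ?_, ?_⟩
      · intro k hk
        rw [Function.update_of_ne (by omega : k ≠ m)]; exact L1 k (by omega)
      · intro k hk
        rw [Function.update_of_ne (by omega : k ≠ m)]; exact L2 k hk
      · intro k hk1 hk2
        rcases eq_or_ne k m with h | h
        · subst h; rw [Function.update_self]; exact ⟨ht1, ht2''⟩
        · rw [Function.update_of_ne h]; exact L3 k (by omega) hk2
      · intro k hk
        rcases eq_or_ne k m with h | h
        · subst h; rw [Function.update_self]; exact ⟨htmem.1, htmem.2⟩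
        · rw [Function.update_of_ne h]; exact L6 k hk
      · intro k hk
        rcases eq_or_ne k m with h | h
        · subst h
          rw [Function.update_self, Function.update_of_ne (by omega : m+1 ≠ m)]
          exact ht2'
        · rcases eq_or_ne (k+1) m with h' | h'
          · rw [Function.update_of_ne h, h', Function.update_self]
            have : z k = X k := L1 k (by omega)
            rw [this]
            calc X k < X m := by
                  have : k = m - 1 := by omega
                  subst this
                  have := hXlt (m-1) (by omega)
                  simpa [Nat.sub_add_cancel hm1] using this
              _ < t := ht1
          · rw [Function.update_of_ne h, Function.update_of_ne h']
            exact L5 k hk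
      · intro k hk1 hk2
        rcases eq_or_ne k m with h | h
        · subst h
          rw [Function.update_self, Function.update_of_ne (by omega : m+1 ≠ m)]
          linarith
        · rcases eq_or_ne (k+1) m with h' | h'
          · -- k = m-1
            rw [Function.update_of_ne h, h', Function.update_self]
            have hk' : k = m - 1 := by omega
            have hzk : z k = X k := L1 k (by omega)
            rw [hzk]
            have hXm : X (k+1) = X m := by rw [h']
            have hineq : G k (X (k+1)) < G k t := by
              refine hGX k (by omega) _ _ (hmem (k+1) (by omega)) htmem ?_
              rw [hXm]; exact ht1
            have := hp k (by omega)
            linarith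
          · rw [Function.update_of_ne h, Function.update_of_ne h']
            exact L7 k (by omega) hk2
  -- instantiate left stage fully
  obtain ⟨z, M1, M2, M3, M6, M5, M7⟩ := left K (le_refl _)
  rw [Nat.sub_self] at M1 M7
  refine ⟨z, M1 0 (le_refl _), ?_, M5, fun k hk => M7 k (Nat.zero_le _) hk⟩
  rw [M2 n (by omega), hy2 n (by omega)]

theorem stmt2 (n : ℕ) (hn : 1 ≤ n) (F : Fin n → ℝ → ℝ)
    (hcont : ∀ i, ContinuousOn (F i) (Icc 0 1))
    (hmono : ∀ i, StrictMonoOn (F i) (Icc 0 1))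
    (h0 : ∀ i, F i 0 = 0) (h1 : ∀ i, F i 1 = 1)
    (w : Fin n → ℝ) (hw : ∀ i, 0 < w i) (hsum : ∑ i, w i = 1)
    (x : Fin (n+1) → ℝ) (σ : Equiv.Perm (Fin n))
    (hxmono : Monotone x) (hx0 : x 0 = 0) (hxn : x (Fin.last n) = 1)
    (hprop : ∀ k : Fin n, w (σ k) ≤ F (σ k) (x k.succ) - F (σ k) (x k.castSucc))
    (hstrict : ∃ k : Fin n, w (σ k) < F (σ k) (x k.succ) - F (σ k) (x k.castSucc)) :
    ∃ y : Fin (n+1) → ℝ, Monotone y ∧ y 0 = 0 ∧ y (Fin.last n) = 1 ∧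
      ∀ k : Fin n, w (σ k) < F (σ k) (y k.succ) - F (σ k) (y k.castSucc) := by
  set X : ℕ → ℝ := fun k => x ⟨min k n, by omega⟩ with hXdef
  set G : ℕ → ℝ → ℝ := fun k t => if h : k < n then F (σ ⟨k, h⟩) t else t with hGdef
  set W : ℕ → ℝ := fun k => if h : k < n then w (σ ⟨k, h⟩) else 1 with hWdef
  have hXeq : ∀ k (h : k ≤ n), X k = x ⟨k, by omega⟩ := by
    intro k h
    simp only [hXdef]
    congr 1
    exact Fin.ext (by simp [min_eq_left h])
  have hGeq : ∀ k (h : k < n) (t : ℝ), G k t = F (σ ⟨k, h⟩) t := by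
    intro k h t; simp only [hGdef, dif_pos h]
  have hWeq : ∀ k (h : k < n), W k = w (σ ⟨k, h⟩) := by
    intro k h; simp only [hWdef, dif_pos h]
  have hGc : ∀ k, k < n → ContinuousOn (G k) (Icc 0 1) := by
    intro k h
    have : G k = F (σ ⟨k, h⟩) := funext (hGeq k h)
    rw [this]; exact hcont _
  have hGm : ∀ k, k < n → StrictMonoOn (G k) (Icc 0 1) := by
    intro k h
    have : G k = F (σ ⟨k, h⟩) := funext (hGeq k h)
    rw [this]; exact hmono _
  have hsucc : ∀ (k : Fin n), x k.succ = X (k.val + 1) := by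
    intro k
    rw [hXeq (k.val + 1) (by omega)]
    exact congrArg x (Fin.ext (by simp))
  have hcast : ∀ (k : Fin n), x k.castSucc = X k.val := by
    intro k
    rw [hXeq k.val (by omega)]
    exact congrArg x (Fin.ext (by simp))
  have hp : ∀ k, k < n → W k ≤ G k (X (k+1)) - G k (X k) := by
    intro k h
    rw [hWeq k h, hGeq k h, hGeq k h]
    have := hprop ⟨k, h⟩
    rwa [hsucc ⟨k, h⟩, hcast ⟨k, h⟩] at this
  have hXb : ∀ k, k ≤ n → 0 ≤ X k ∧ X k ≤ 1 := by
    intro k hk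
    rw [hXeq k hk]
    constructor
    · rw [← hx0]; exact hxmono (Fin.zero_le _)
    · rw [← hxn]; exact hxmono (Fin.le_last _)
  have hXlt : ∀ k, k < n → X k < X (k+1) := by
    intro k hk
    have h1 := hp k hk
    have h2 : 0 < W k := by rw [hWeq k hk]; exact hw _
    by_contra hc
    push_neg at hc
    have := (hGm k hk).monotoneOn ⟨(hXb (k+1) (by omega)).1, (hXb (k+1) (by omega)).2⟩
      ⟨(hXb k (by omega)).1, (hXb k (by omega)).2⟩ hc
    linarith
  obtain ⟨k0, hk0⟩ := hstrict
  have hs : W k0.val < G k0.val (X (k0.val+1)) - G k0.val (X k0.val) := by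
    rw [hWeq _ k0.isLt, hGeq _ k0.isLt, hGeq _ k0.isLt]
    have e : (⟨k0.val, k0.isLt⟩ : Fin n) = k0 := Fin.ext rfl
    rw [e]
    rwa [hsucc k0, hcast k0] at hk0
  obtain ⟨z, hz0, hzn, hz5, hz7⟩ := aux_natMain n G W X hGc hGm hp hXb hXlt k0.val k0.isLt hs
  have zmono : ∀ a b : ℕ, a ≤ b → b ≤ n → z a ≤ z b := by
    intro a b
    induction b with
    | zero => intro h _; rw [Nat.le_zero.mp h]
    | succ b ih =>
      intro hab hbn
      rcases Nat.lt_or_ge a (b+1) with h | h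
      · exact le_trans (ih (by omega) (by omega)) (hz5 b (by omega)).le
      · rw [show a = b + 1 by omega]
  refine ⟨fun k => z k.val, ?_, ?_, ?_, ?_⟩
  · intro a b hab
    exact zmono a.val b.val hab (by omega)
  · show z 0 = 0
    rw [hz0, hXeq 0 (by omega), ← hx0]
    congr 1
  · show z n = 1
    rw [hzn, hXeq n (le_refl _), ← hxn]
    congr 1
  · intro k
    have := hz7 k.val k.isLt
    rw [hWeq _ k.isLt, hGeq _ k.isLt, hGeq _ k.isLt] at this
    have e : (⟨k.val, k.isLt⟩ : Fin n) = k := Fin.ext rfl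
    rw [e] at this
    have e1 : (k.succ : Fin (n+1)).val = k.val + 1 := by simp
    have e2 : (k.castSucc : Fin (n+1)).val = k.val := by simp
    simpa [e1, e2] using this
end

section
/- Let F₁, F₂ : [0,1] → [0,1] be continuous, non-decreasing, with Fᵢ(0)=0 and Fᵢ(1)=1 (two agents, not necessarily hungry, equal entitlements 1/2). Then there exists a point x ∈ [0,1] such that F₁(x) > 1/2 and 1 − F₂(x) > 1/2, or F₂(x) > 1/2 and 1 − F₁(x) > 1/2, if and only if the closed intervals F₁⁻¹({1/2}) and F₂⁻¹({1/2}) are disjoint. Equivalently, a connected strongly-proportional allocation for the two agents exists if and only if their intervals of 1/2-marks are disjoint. -/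
open Set

private lemma stmt3_marks (F : ℝ → ℝ) (hcont : ContinuousOn F (Icc 0 1))
    (h0 : F 0 = 0) (h1 : F 1 = 1) :
    ∃ a b : ℝ, IsLeast {x ∈ Icc (0:ℝ) 1 | F x = 1/2} a ∧
      IsGreatest {x ∈ Icc (0:ℝ) 1 | F x = 1/2} b := by
  have hne : ({x ∈ Icc (0:ℝ) 1 | F x = 1/2}).Nonempty := by
    have := intermediate_value_Icc (by norm_num : (0:ℝ) ≤ 1) hcont
    have h2 : (1/2 : ℝ) ∈ Icc (F 0) (F 1) := by rw [h0, h1]; norm_num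
    obtain ⟨c, hc, hc2⟩ := this h2
    exact ⟨c, hc, hc2⟩
  have hclosed : IsClosed {x ∈ Icc (0:ℝ) 1 | F x = 1/2} := by
    have h := hcont.preimage_isClosed_of_isClosed isClosed_Icc
      (isClosed_singleton (x := (1/2 : ℝ)))
    have heq : {x ∈ Icc (0:ℝ) 1 | F x = 1/2} = Icc 0 1 ∩ F ⁻¹' {1/2} := by
      ext x; simp [Set.mem_sep_iff]
    rw [heq]; exact h
  have hcompact : IsCompact {x ∈ Icc (0:ℝ) 1 | F x = 1/2} :=
    isCompact_Icc.of_isClosed_subset hclosed (fun x hx => hx.1)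
  obtain ⟨a, ha⟩ := hcompact.exists_isLeast hne
  obtain ⟨b, hb⟩ := hcompact.exists_isGreatest hne
  exact ⟨a, b, ha, hb⟩

private lemma stmt3_aux (F₁ F₂ : ℝ → ℝ)
    (hmono₁ : MonotoneOn F₁ (Icc 0 1)) (hmono₂ : MonotoneOn F₂ (Icc 0 1))
    (b₁ a₂ : ℝ) (hb₁ : IsGreatest {x ∈ Icc (0:ℝ) 1 | F₁ x = 1/2} b₁)
    (ha₂ : IsLeast {x ∈ Icc (0:ℝ) 1 | F₂ x = 1/2} a₂) (h : b₁ < a₂) :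
    ∃ x ∈ Icc (0:ℝ) 1, 1/2 < F₁ x ∧ 1/2 < 1 - F₂ x := by
  obtain ⟨⟨hb₁mem, hb₁val⟩, hb₁ub⟩ := hb₁
  obtain ⟨⟨ha₂mem, ha₂val⟩, ha₂lb⟩ := ha₂
  obtain ⟨hb₁0, hb₁1⟩ := hb₁mem
  obtain ⟨ha₂0, ha₂1⟩ := ha₂mem
  set x := (b₁ + a₂) / 2 with hx
  have hxmem : x ∈ Icc (0:ℝ) 1 := ⟨by linarith, by linarith⟩
  refine ⟨x, hxmem, ?_, ?_⟩
  · have hle : F₁ b₁ ≤ F₁ x := hmono₁ ⟨hb₁0, hb₁1⟩ hxmem (by linarith)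
    rcases lt_or_eq_of_le hle with hlt | heq
    · linarith [hb₁val ▸ hlt]
    · exfalso
      have : x ≤ b₁ := hb₁ub ⟨hxmem, by rw [← heq, hb₁val]⟩
      linarith
  · have hle : F₂ x ≤ F₂ a₂ := hmono₂ hxmem ⟨ha₂0, ha₂1⟩ (by linarith)
    rcases lt_or_eq_of_le hle with hlt | heq
    · rw [ha₂val] at hlt; linarith
    · exfalso
      have : a₂ ≤ x := ha₂lb ⟨hxmem, by rw [heq, ha₂val]⟩
      linarith

theorem stmt3 (F₁ F₂ : ℝ → ℝ)
    (hcont₁ : ContinuousOn F₁ (Icc 0 1)) (hcont₂ : ContinuousOn F₂ (Icc 0 1))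
    (hmono₁ : MonotoneOn F₁ (Icc 0 1)) (hmono₂ : MonotoneOn F₂ (Icc 0 1))
    (h10 : F₁ 0 = 0) (h11 : F₁ 1 = 1) (h20 : F₂ 0 = 0) (h21 : F₂ 1 = 1) :
    (∃ x ∈ Icc (0:ℝ) 1,
        (1/2 < F₁ x ∧ 1/2 < 1 - F₂ x) ∨ (1/2 < F₂ x ∧ 1/2 < 1 - F₁ x)) ↔
      Disjoint {x ∈ Icc (0:ℝ) 1 | F₁ x = 1/2} {x ∈ Icc (0:ℝ) 1 | F₂ x = 1/2} := by
  constructor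
  · rintro ⟨x, hx, h | h⟩ <;> rw [Set.disjoint_left] <;>
      rintro y ⟨hy, hy1⟩ ⟨_, hy2⟩
    · have h1 : y < x := by
        by_contra h'
        push_neg at h'
        have := hmono₁ hx hy h'
        rw [hy1] at this
        linarith [h.1]
      have h2 : x < y := by
        by_contra h'
        push_neg at h'
        have := hmono₂ hy hx h'
        rw [hy2] at this
        linarith [h.2]
      linarith
    · have h1 : y < x := by
        by_contra h'
        push_neg at h'
        have := hmono₂ hx hy h'
        rw [hy2] at this
        linarith [h.1]
      have h2 : x < y := by
        by_contra h'
        push_neg at h'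
        have := hmono₁ hy hx h'
        rw [hy1] at this
        linarith [h.2]
      linarith
  · intro hdisj
    obtain ⟨a₁, b₁, ha₁, hb₁⟩ := stmt3_marks F₁ hcont₁ h10 h11
    obtain ⟨a₂, b₂, ha₂, hb₂⟩ := stmt3_marks F₂ hcont₂ h20 h21
    have hcase : b₁ < a₂ ∨ b₂ < a₁ := by
      by_contra h'
      push_neg at h'
      obtain ⟨h1, h2⟩ := h'
      set m := max a₁ a₂ with hm
      have ha₁b₁ : a₁ ≤ b₁ := ha₁.2 hb₁.1
      have ha₂b₂ : a₂ ≤ b₂ := ha₂.2 hb₂.1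
      have hma : a₁ ≤ m := le_max_left _ _
      have hmb : m ≤ b₁ := max_le ha₁b₁ h1
      have hma2 : a₂ ≤ m := le_max_right _ _
      have hmb2 : m ≤ b₂ := max_le h2 ha₂b₂
      have hmmem : m ∈ Icc (0:ℝ) 1 := ⟨le_trans ha₁.1.1.1 hma, le_trans hmb hb₁.1.1.2⟩
      have hm1 : F₁ m = 1/2 := le_antisymm
        (by have := hmono₁ hmmem hb₁.1.1 hmb; rw [hb₁.1.2] at this; exact this)
        (by have := hmono₁ ha₁.1.1 hmmem hma; rw [ha₁.1.2] at this; exact this)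
      have hm2 : F₂ m = 1/2 := le_antisymm
        (by have := hmono₂ hmmem hb₂.1.1 hmb2; rw [hb₂.1.2] at this; exact this)
        (by have := hmono₂ ha₂.1.1 hmmem hma2; rw [ha₂.1.2] at this; exact this)
      exact Set.disjoint_left.mp hdisj ⟨hmmem, hm1⟩ ⟨hmmem, hm2⟩
    rcases hcase with hc | hc
    · obtain ⟨x, hx, h1, h2⟩ := stmt3_aux F₁ F₂ hmono₁ hmono₂ b₁ a₂ hb₁ ha₂ hc
      exact ⟨x, hx, Or.inl ⟨h1, h2⟩⟩
    · obtain ⟨x, hx, h1, h2⟩ := stmt3_aux F₂ F₁ hmono₂ hmono₁ b₂ a₁ hb₂ ha₁ hc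
      exact ⟨x, hx, Or.inr ⟨h1, h2⟩⟩
end

section
/- Let n ≥ 1 and F₁,…,Fₙ : [0,1] → [0,1] be continuous, non-decreasing, with Fᵢ(0)=0, Fᵢ(1)=1, with equal entitlements 1/n. If there exists a connected strongly-proportional allocation (cut points 0 = x₀ ≤ ⋯ ≤ xₙ = 1 and bijection σ with F_{σ(k)}(x_k) − F_{σ(k)}(x_{k−1}) > 1/n for all k), then there exist two distinct agents i, j and t ∈ {1,…,n−1} such that the closed intervals Fᵢ⁻¹({t/n}) and Fⱼ⁻¹({t/n}) are disjoint. -/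
/-!
Suppose any two agents share a `t/n`-mark for each `0 < t < n`. If some agent values `[0, b]` at
more than `t/n`, then `b` lies beyond the shared mark, so every agent values `[0, b]` at least
`t/n`. Along a strongly-proportional allocation, induction on `k` then gives `F i (x k) ≥ k/n` for
every agent `i`, and the owner of the last piece gets at most `1 - (n-1)/n = 1/n`.
-/

open Set

theorem MonotoneOn.apply_le_apply_of_lt {α β γ : Type*} [LinearOrder α] [Preorder β]
    [Preorder γ] {f : α → β} {g : α → γ} {s : Set α} (hf : MonotoneOn f s)
    (hg : MonotoneOn g s) {x z : α} (hx : x ∈ s) (hz : z ∈ s) (hlt : g z < g x) : f z ≤ f x :=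
  hf hz hx (hg.reflect_lt hz hx hlt).le

theorem div_le_apply_cut_of_shared_marks {ι : Type*} {n : ℕ} {F : ι → ℝ → ℝ}
    (hmono : ∀ i, MonotoneOn (F i) (Icc 0 1)) (h0 : ∀ i, F i 0 = 0)
    (hmarks : ∀ i j, i ≠ j → ∀ t : ℕ, 0 < t → t < n →
      ∃ z ∈ Icc (0 : ℝ) 1, F i z = t / n ∧ F j z = t / n)
    {x : Fin (n + 1) → ℝ} (hx : ∀ k, x k ∈ Icc 0 1) (hx0 : x 0 = 0) {σ : Fin n → ι}
    (hσ : ∀ k : Fin n, 1 / (n : ℝ) < F (σ k) (x k.succ) - F (σ k) (x k.castSucc)) :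
    ∀ (k : Fin n) (i : ι), (k : ℝ) / n ≤ F i (x k.castSucc) := by
  rintro ⟨k, hk⟩
  induction k with
  | zero => intro i; simp [hx0, h0 i]
  | succ k ih =>
    intro i
    set j := σ ⟨k, by omega⟩
    have hj : ((k + 1 : ℕ) : ℝ) / n < F j (x ⟨k + 1, by omega⟩) := by
      have hgain := hσ ⟨k, by omega⟩
      have hprev := ih (by omega) j
      simp only [Fin.succ_mk, Fin.castSucc_mk] at hgain hprev
      rw [Nat.cast_succ, add_div]
      linarith
    rcases eq_or_ne i j with rfl | hij
    · exact hj.le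
    obtain ⟨z, hz, hiz, hjz⟩ := hmarks i j hij (k + 1) k.succ_pos hk
    rw [← hjz] at hj
    rw [← hiz]
    exact (hmono i).apply_le_apply_of_lt (hmono j) (hx _) hz hj

theorem stmt5_general (n : ℕ) (F : Fin n → ℝ → ℝ)
    (hmono : ∀ i, MonotoneOn (F i) (Icc 0 1))
    (h0 : ∀ i, F i 0 = 0) (h1 : ∀ i, F i 1 = 1)
    (halloc : ∃ x : Fin (n+1) → ℝ, Monotone x ∧ x 0 = 0 ∧ x (Fin.last n) = 1 ∧
      ∃ σ : Equiv.Perm (Fin n), ∀ k : Fin n,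
        1 / (n : ℝ) < F (σ k) (x k.succ) - F (σ k) (x k.castSucc)) :
    ∃ i j : Fin n, i ≠ j ∧ ∃ t : ℕ, 0 < t ∧ t < n ∧
      Disjoint {x ∈ Icc (0:ℝ) 1 | F i x = (t : ℝ) / (n : ℝ)}
               {x ∈ Icc (0:ℝ) 1 | F j x = (t : ℝ) / (n : ℝ)} := by
  obtain ⟨x, hxm, hx0, hx1, σ, hσ⟩ := halloc
  by_contra! hmarks
  have hx : ∀ k, x k ∈ Icc 0 1 := fun k =>
    ⟨hx0 ▸ hxm (Fin.zero_le k), hx1 ▸ hxm (Fin.le_last k)⟩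
  obtain ⟨m, rfl⟩ : ∃ m, n = m + 1 := by
    refine Nat.exists_eq_add_one.mpr (Nat.pos_of_ne_zero ?_)
    rintro rfl
    rw [Fin.last_zero, hx0] at hx1
    exact zero_ne_one hx1
  have hshared : ∀ i j, i ≠ j → ∀ t : ℕ, 0 < t → t < m + 1 →
      ∃ z ∈ Icc (0 : ℝ) 1, F i z = t / (m + 1 : ℕ) ∧ F j z = t / (m + 1 : ℕ) := by
    intro i j hij t ht htn
    obtain ⟨z, ⟨hz, hiz⟩, -, hjz⟩ := not_disjoint_iff.mp (hmarks i j hij t ht htn)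
    exact ⟨z, hz, hiz, hjz⟩
  have hlow := div_le_apply_cut_of_shared_marks hmono h0 hshared hx hx0 hσ
    (Fin.last m) (σ (Fin.last m))
  have hlast := hσ (Fin.last m)
  rw [Fin.succ_last, hx1, h1] at hlast
  have hsum : (m : ℝ) / (m + 1 : ℕ) + 1 / (m + 1 : ℕ) = 1 := by field_simp; push_cast; ring
  simp only [Fin.val_last] at hlow
  linarith

theorem stmt5 (n : ℕ) (hn : 1 ≤ n) (F : Fin n → ℝ → ℝ)
    (hcont : ∀ i, ContinuousOn (F i) (Icc 0 1))
    (hmono : ∀ i, MonotoneOn (F i) (Icc 0 1))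
    (h0 : ∀ i, F i 0 = 0) (h1 : ∀ i, F i 1 = 1)
    (halloc : ∃ x : Fin (n+1) → ℝ, Monotone x ∧ x 0 = 0 ∧ x (Fin.last n) = 1 ∧
      ∃ σ : Equiv.Perm (Fin n), ∀ k : Fin n,
        1 / (n : ℝ) < F (σ k) (x k.succ) - F (σ k) (x k.castSucc)) :
    ∃ i j : Fin n, i ≠ j ∧ ∃ t : ℕ, 0 < t ∧ t < n ∧
      Disjoint {x ∈ Icc (0:ℝ) 1 | F i x = (t : ℝ) / (n : ℝ)}
               {x ∈ Icc (0:ℝ) 1 | F j x = (t : ℝ) / (n : ℝ)} :=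
  stmt5_general n F hmono h0 h1 halloc
end

section
/- Let n ≥ 1 and F₁,…,Fₙ : [0,1] → [0,1] be continuous, non-decreasing, with Fᵢ(0)=0, Fᵢ(1)=1, with equal entitlements 1/n. If there exists t ∈ {1,…,n−1} such that the closed intervals Fᵢ⁻¹({t/n}), i = 1,…,n, are pairwise disjoint, then a connected strongly-proportional allocation exists: there are cut points 0 = x₀ ≤ ⋯ ≤ xₙ = 1 and a bijection σ such that F_{σ(k)}(x_k) − F_{σ(k)}(x_{k−1}) > 1/n for all k. -/
/-!
Let `r = t / n`. The `r`-marks of the agents are pairwise disjoint intervals, so sorting them one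
finds a point `y` that is nobody's `r`-mark and has exactly `t` agents' marks to its left. These
`t` agents value `[0, y]` at more than `r = t / n`, the other `n - t` agents value `[y, 1]` at more
than `1 - r = (n - t) / n`. A proportional division of `[0, y]` among the former and of `[y, 1]`
among the latter therefore gives every agent strictly more than `1 / n`.
-/

open Set Function

/-- `P i a b` reads: agent `i` accepts the piece `[a, b]`. -/
def HasConnectedAllocation (m : ℕ) (ι : Type*) (u v : ℝ) (P : ι → ℝ → ℝ → Prop) : Prop :=
  ∃ x : Fin (m + 1) → ℝ, Monotone x ∧ x 0 = u ∧ x (Fin.last m) = v ∧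
    ∃ σ : Fin m ≃ ι, ∀ k, P (σ k) (x k.castSucc) (x k.succ)

namespace HasConnectedAllocation

variable {m : ℕ} {ι κ : Type*} {u v w : ℝ} {P Q : ι → ℝ → ℝ → Prop}

theorem mono (h : HasConnectedAllocation m ι u v P) (hPQ : ∀ i a b, P i a b → Q i a b) :
    HasConnectedAllocation m ι u v Q := by
  obtain ⟨x, hx, hx0, hxm, σ, hσ⟩ := h
  exact ⟨x, hx, hx0, hxm, σ, fun k => hPQ _ _ _ (hσ k)⟩

theorem equiv {Q : κ → ℝ → ℝ → Prop} (e : ι ≃ κ)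
    (h : HasConnectedAllocation m ι u v fun i => Q (e i)) :
    HasConnectedAllocation m κ u v Q := by
  obtain ⟨x, hx, hx0, hxm, σ, hσ⟩ := h
  exact ⟨x, hx, hx0, hxm, σ.trans e, hσ⟩

theorem single [Unique ι] (huv : u ≤ v) (h : ∀ i, P i u v) :
    HasConnectedAllocation 1 ι u v P := by
  refine ⟨![u, v], ?_, rfl, rfl, Equiv.ofUnique _ _, fun k => ?_⟩
  · rw [Fin.monotone_iff_le_succ]
    intro k
    obtain rfl := Fin.fin_one_eq_zero k
    exact huv
  · obtain rfl := Fin.fin_one_eq_zero k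
    exact h _

/-- The cut points of the concatenation are `x₁ (min k m₁) + x₂ (k - m₁) - w`: each summand is
constantly `w` on the other's range of indices. -/
theorem append {m₁ m₂ : ℕ} {ι₁ ι₂ : Type*} {P₁ : ι₁ → ℝ → ℝ → Prop} {P₂ : ι₂ → ℝ → ℝ → Prop}
    (h₁ : HasConnectedAllocation m₁ ι₁ u w P₁) (h₂ : HasConnectedAllocation m₂ ι₂ w v P₂) :
    HasConnectedAllocation (m₁ + m₂) (ι₁ ⊕ ι₂) u v (Sum.elim P₁ P₂) := by
  obtain ⟨x₁, hx₁, hx₁0, hx₁m, σ₁, hσ₁⟩ := h₁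
  obtain ⟨x₂, hx₂, hx₂0, hx₂m, σ₂, hσ₂⟩ := h₂
  let lo : Fin (m₁ + m₂ + 1) → Fin (m₁ + 1) := fun k => ⟨min k m₁, by omega⟩
  let hi : Fin (m₁ + m₂ + 1) → Fin (m₂ + 1) := fun k => ⟨k - m₁, by omega⟩
  have hlo : Monotone lo := fun k l hkl => Fin.mk_le_mk.2 (min_le_min_right _ hkl)
  have hhi : Monotone hi := fun k l hkl => Fin.mk_le_mk.2 (Nat.sub_le_sub_right hkl _)
  let x : Fin (m₁ + m₂ + 1) → ℝ := fun k => x₁ (lo k) + x₂ (hi k) - w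
  have hx_left (k : Fin (m₁ + m₂ + 1)) (hk : (k : ℕ) ≤ m₁) : x k = x₁ ⟨k, by omega⟩ := by
    have : hi k = 0 := Fin.ext (by simp [hi]; omega)
    simp only [x, this, hx₂0, add_sub_cancel_right]
    congr 1; ext; simp [lo, hk]
  have hx_right (k : Fin (m₁ + m₂ + 1)) (hk : m₁ ≤ (k : ℕ)) : x k = x₂ ⟨k - m₁, by omega⟩ := by
    have : lo k = Fin.last m₁ := Fin.ext (by simp [lo, hk])
    simp only [x, this, hx₁m, add_sub_cancel_left]
    rfl
  refine ⟨x, ((hx₁.comp hlo).add (hx₂.comp hhi)).add_const _, ?_, ?_,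
    finSumFinEquiv.symm.trans (σ₁.sumCongr σ₂), fun k => ?_⟩
  · rw [hx_left 0 (Nat.zero_le _)]; exact hx₁0
  · rw [hx_right _ (by simp)]; convert hx₂m using 2; ext; simp
  · induction k using Fin.addCases with
    | left k =>
      simp only [Equiv.trans_apply, finSumFinEquiv_symm_apply_castAdd, Equiv.sumCongr_apply,
        Sum.map_inl, Sum.elim_inl]
      rw [hx_left _ (by simp), hx_left _ (by simp only [Fin.val_succ, Fin.val_castAdd]; omega)]
      exact hσ₁ k
    | right k =>
      simp only [Equiv.trans_apply, finSumFinEquiv_symm_apply_natAdd, Equiv.sumCongr_apply,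
        Sum.map_inr, Sum.elim_inr]
      rw [hx_right _ (by simp), hx_right _ (by simp only [Fin.val_succ, Fin.val_natAdd]; omega)]
      convert hσ₂ k using 3
      all_goals simp only [Fin.val_castSucc, Fin.val_succ, Fin.val_natAdd]; omega

theorem append_sumCompl {m₁ m₂ : ℕ} (p : ι → Prop) [DecidablePred p]
    (h₁ : HasConnectedAllocation m₁ {i // p i} u w fun i => Q i)
    (h₂ : HasConnectedAllocation m₂ {i // ¬p i} w v fun i => Q i) :
    HasConnectedAllocation (m₁ + m₂) ι u v Q := by
  refine ((h₁.append h₂).mono ?_).equiv (Equiv.sumCompl p)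
  rintro (i | i) a b h <;> exact h

end HasConnectedAllocation

open HasConnectedAllocation in
/-- Last diminisher: the agent with the leftmost `1/m`-mark takes the first piece, and the others,
to whom that piece is worth at most `1/m` of the cake, share the rest. -/
theorem exists_proportional_allocation {ι : Type*} [Fintype ι] {m : ℕ} (hm : 0 < m)
    (hι : Fintype.card ι = m) {G : ι → ℝ → ℝ} {u v : ℝ} (huv : u ≤ v)
    (hcont : ∀ i, ContinuousOn (G i) (Icc u v)) (hmono : ∀ i, MonotoneOn (G i) (Icc u v)) :
    HasConnectedAllocation m ι u v fun i a b => (G i v - G i u) / m ≤ G i b - G i a := by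
  classical
  induction m generalizing ι u with
  | zero => omega
  | succ m ih =>
    have hD (i : ι) : 0 ≤ G i v - G i u :=
      sub_nonneg.2 (hmono i ⟨le_rfl, huv⟩ ⟨huv, le_rfl⟩ huv)
    rcases Nat.eq_zero_or_pos m with rfl | hm
    · obtain ⟨_⟩ := Fintype.card_eq_one_iff_nonempty_unique.mp hι
      exact single huv (by simp)
    have hmark (i : ι) : ∃ c ∈ Icc u v, G i c = G i u + (G i v - G i u) / (m + 1 : ℕ) := by
      refine intermediate_value_Icc huv (hcont i) ⟨?_, ?_⟩
      · have := div_nonneg (hD i) (Nat.cast_nonneg (α := ℝ) (m + 1))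
        linarith
      · have := div_le_self (hD i) (by simp : (1 : ℝ) ≤ (m + 1 : ℕ))
        linarith
    choose c hc hGc using hmark
    have : Nonempty ι := Fintype.card_pos_iff.mp (by omega)
    obtain ⟨i₀, -, hi₀⟩ := Finset.exists_min_image Finset.univ c Finset.univ_nonempty
    have hsub : Icc (c i₀) v ⊆ Icc u v := Icc_subset_Icc (hc i₀).1 le_rfl
    have hfirst : HasConnectedAllocation 1 {i // i = i₀} u (c i₀)
        fun i a b => (G i v - G i u) / (m + 1 : ℕ) ≤ G i b - G i a := by
      refine single (hc i₀).1 ?_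
      rintro ⟨i, rfl⟩
      simp [hGc i]
    have hrest : HasConnectedAllocation m {i // ¬i = i₀} (c i₀) v
        fun i a b => (G i v - G i u) / (m + 1 : ℕ) ≤ G i b - G i a := by
      have hcard : Fintype.card {i // ¬i = i₀} = m := by
        rw [Fintype.card_subtype_compl, Fintype.card_subtype_eq, hι, Nat.add_sub_cancel]
      refine (ih (G := fun i => G i) hm hcard (hc i₀).2
        (fun i => (hcont i).mono hsub) (fun i => (hmono i).mono hsub)).mono ?_
      intro i a b h
      refine le_trans ?_ h
      have hle : G i (c i₀) ≤ G i u + (G i v - G i u) / (m + 1 : ℕ) :=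
        hGc i ▸ hmono i (hc i₀) (hc i) (hi₀ i (Finset.mem_univ _))
      calc (G i v - G i u) / (m + 1 : ℕ)
          = (G i v - (G i u + (G i v - G i u) / (m + 1 : ℕ))) / m := by
            field_simp; push_cast; ring
        _ ≤ (G i v - G i (c i₀)) / m := by gcongr
    have h := append_sumCompl
      (Q := fun i a b => (G i v - G i u) / (m + 1 : ℕ) ≤ G i b - G i a) (· = i₀) hfirst hrest
    rwa [Nat.add_comm 1 m] at h

theorem exists_levelSet_eq_Icc {F : ℝ → ℝ} {u v r : ℝ} (huv : u ≤ v)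
    (hcont : ContinuousOn F (Icc u v)) (hmono : MonotoneOn F (Icc u v)) (hr : r ∈ Icc (F u) (F v)) :
    ∃ a b, a ≤ b ∧ {x ∈ Icc u v | F x = r} = Icc a b ∧
      (∀ x ∈ Icc u v, x < a → F x < r) ∧ (∀ x ∈ Icc u v, b < x → r < F x) := by
  set S := {x ∈ Icc u v | F x = r}
  have hS : IsCompact S :=
    isCompact_Icc.of_isClosed_subset
      (hcont.preimage_isClosed_of_isClosed isClosed_Icc isClosed_singleton) (sep_subset _ _)
  have hne : S.Nonempty := intermediate_value_Icc huv hcont hr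
  obtain ⟨a, ⟨haI, hFa⟩, ha⟩ := hS.exists_isLeast hne
  obtain ⟨b, ⟨hbI, hFb⟩, hb⟩ := hS.exists_isGreatest hne
  have hSab : S = Icc a b := by
    refine Subset.antisymm (fun x hx => ⟨ha hx, hb hx⟩) fun x ⟨hax, hxb⟩ => ?_
    have hxI : x ∈ Icc u v := ⟨haI.1.trans hax, hxb.trans hbI.2⟩
    exact ⟨hxI, le_antisymm (hFb ▸ hmono hxI hbI hxb) (hFa ▸ hmono haI hxI hax)⟩
  refine ⟨a, b, ha ⟨hbI, hFb⟩, hSab, fun x hx hxa => ?_, fun x hx hbx => ?_⟩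
  · refine (hFa ▸ hmono hx haI hxa.le).lt_of_ne fun hFx => ?_
    exact hxa.not_ge (ha ⟨hx, hFx⟩)
  · refine (hFb ▸ hmono hbI hx hbx.le).lt_of_ne fun hFx => ?_
    exact hbx.not_ge (hb ⟨hx, hFx.symm⟩)

/-- Sorting the intervals by their right endpoints, `y` is taken in the gap between the `t`-th
and the `(t+1)`-st. -/
theorem exists_card_lt_of_pairwise_disjoint_Icc {n t : ℕ} {a b : Fin n → ℝ}
    (hab : ∀ i, a i ≤ b i) (hdisj : Pairwise (Disjoint on fun i => Icc (a i) (b i)))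
    (ht₀ : 0 < t) (htn : t < n) :
    ∃ y, Fintype.card {i // b i < y} = t ∧ ∀ i, b i < y ∨ y < a i := by
  have hsep {i j} (hij : i ≠ j) (hb : b i < b j) : b i < a j := by
    by_contra! h
    exact Set.disjoint_left.mp (hdisj hij) ⟨hab i, le_rfl⟩ ⟨h, hb.le⟩
  have hinj : Injective b := fun i j h => by
    by_contra hij
    exact Set.disjoint_left.mp (hdisj hij) ⟨hab i, le_rfl⟩ ⟨h ▸ hab j, h.le⟩
  set ρ := Tuple.sort b
  have hρ : StrictMono (b ∘ ρ) :=
    (Tuple.monotone_sort b).strictMono_of_injective (hinj.comp ρ.injective)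
  have hsep' {p q : Fin n} (hpq : p < q) : b (ρ p) < a (ρ q) :=
    hsep (ρ.injective.ne hpq.ne) (hρ hpq)
  set p₀ : Fin n := ⟨t - 1, by omega⟩
  set p₁ : Fin n := ⟨t, htn⟩
  have hp : p₀ < p₁ := Fin.mk_lt_mk.2 (by omega)
  set y := (b (ρ p₀) + a (ρ p₁)) / 2
  have hy₀ : b (ρ p₀) < y := by have := hsep' hp; simp only [y]; linarith
  have hy₁ : y < a (ρ p₁) := by have := hsep' hp; simp only [y]; linarith
  have hright {p} (hp : p₁ ≤ p) : y < a (ρ p) := by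
    rcases hp.eq_or_lt with rfl | hp
    · exact hy₁
    · exact hy₁.trans ((hab _).trans_lt (hsep' hp))
  have hiff (p : Fin n) : p < p₁ ↔ b (ρ p) < y := by
    refine ⟨fun hp => (hρ.monotone (Fin.le_def.2 ?_)).trans_lt hy₀, fun hy => ?_⟩
    · rw [Fin.lt_def] at hp; simp only [p₀, p₁] at hp ⊢; omega
    · by_contra! hp
      exact (hy.trans (hright hp)).not_ge (hab _)
  refine ⟨y, ?_, fun i => ?_⟩
  · rw [← Fintype.card_congr (Equiv.subtypeEquiv ρ hiff), Fintype.card_subtype,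
      Finset.filter_gt_eq_Iio, Fin.card_Iio]
  · obtain ⟨p, rfl⟩ := ρ.surjective i
    rcases lt_or_ge p p₁ with hp | hp
    · exact .inl ((hiff p).1 hp)
    · exact .inr (hright hp)

theorem exists_allocation_of_mul_lt {ι : Type*} [Fintype ι] {m : ℕ} (hm : 0 < m)
    (hι : Fintype.card ι = m) {G : ι → ℝ → ℝ} {u v δ : ℝ} (huv : u ≤ v)
    (hcont : ∀ i, ContinuousOn (G i) (Icc u v)) (hmono : ∀ i, MonotoneOn (G i) (Icc u v))
    (hδ : ∀ i, m * δ < G i v - G i u) :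
    HasConnectedAllocation m ι u v fun i a b => δ < G i b - G i a :=
  (exists_proportional_allocation hm hι huv hcont hmono).mono fun i _ _ h =>
    ((lt_div_iff₀' (by exact_mod_cast hm)).2 (hδ i)).trans_le h

theorem exists_card_lt_apply_of_pairwise_disjoint_levelSet {n t : ℕ} {F : Fin n → ℝ → ℝ}
    {u v r : ℝ} (huv : u ≤ v)
    (hcont : ∀ i, ContinuousOn (F i) (Icc u v)) (hmono : ∀ i, MonotoneOn (F i) (Icc u v))
    (hr : ∀ i, r ∈ Icc (F i u) (F i v))
    (hdisj : Pairwise (Disjoint on fun i => {x ∈ Icc u v | F i x = r}))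
    (ht₀ : 0 < t) (htn : t < n) :
    ∃ y ∈ Icc u v, Fintype.card {i // r < F i y} = t ∧ ∀ i, ¬r < F i y → F i y < r := by
  choose a b hab hS hlt hgt using fun i => exists_levelSet_eq_Icc huv (hcont i) (hmono i) (hr i)
  have hdisj' : Pairwise (Disjoint on fun i => Icc (a i) (b i)) := fun i j hij => by
    simpa only [onFun, hS] using hdisj hij
  have hI (i : Fin n) : Icc (a i) (b i) ⊆ Icc u v := hS i ▸ sep_subset _ _
  obtain ⟨y, hcard, hy⟩ := exists_card_lt_of_pairwise_disjoint_Icc hab hdisj' ht₀ htn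
  have hyI : y ∈ Icc u v := by
    obtain ⟨⟨i, hi⟩⟩ := Fintype.card_pos_iff.mp (hcard ▸ ht₀)
    have : 0 < Fintype.card {i // ¬b i < y} := by
      rw [Fintype.card_subtype_compl, hcard, Fintype.card_fin]; omega
    obtain ⟨⟨j, hj⟩⟩ := Fintype.card_pos_iff.mp this
    have hyj := (hy j).resolve_left hj
    exact ⟨(hI i ⟨hab i, le_rfl⟩).1.trans hi.le, hyj.le.trans (hI j ⟨le_rfl, hab j⟩).2⟩
  have hiff (i : Fin n) : r < F i y ↔ b i < y :=
    ⟨fun h => (hy i).resolve_right fun hya => (hlt i y hyI hya).not_gt h, hgt i y hyI⟩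
  refine ⟨y, hyI, ?_, fun i hi => hlt i y hyI ((hy i).resolve_left (mt (hiff i).2 hi))⟩
  rw [← hcard]
  exact Fintype.card_congr (Equiv.subtypeEquivRight hiff)

theorem stmt6_general (n : ℕ) (F : Fin n → ℝ → ℝ)
    (hcont : ∀ i, ContinuousOn (F i) (Icc 0 1))
    (hmono : ∀ i, MonotoneOn (F i) (Icc 0 1))
    (h0 : ∀ i, F i 0 = 0) (h1 : ∀ i, F i 1 = 1)
    (hdisj : ∃ t : ℕ, 0 < t ∧ t < n ∧ ∀ i j : Fin n, i ≠ j →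
      Disjoint {x ∈ Icc (0:ℝ) 1 | F i x = (t : ℝ) / (n : ℝ)}
               {x ∈ Icc (0:ℝ) 1 | F j x = (t : ℝ) / (n : ℝ)}) :
    ∃ x : Fin (n+1) → ℝ, Monotone x ∧ x 0 = 0 ∧ x (Fin.last n) = 1 ∧
      ∃ σ : Equiv.Perm (Fin n), ∀ k : Fin n,
        1 / (n : ℝ) < F (σ k) (x k.succ) - F (σ k) (x k.castSucc) := by
  obtain ⟨t, ht₀, htn, hdisj⟩ := hdisj
  have hn₀ : (0 : ℝ) < n := by exact_mod_cast ht₀.trans htn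
  have hr (i : Fin n) : (t : ℝ) / n ∈ Icc (F i 0) (F i 1) := by
    rw [h0, h1]
    exact ⟨by positivity, div_le_one_of_le₀ (by exact_mod_cast htn.le) hn₀.le⟩
  obtain ⟨y, hy, hcard, hright⟩ :=
    exists_card_lt_apply_of_pairwise_disjoint_levelSet zero_le_one hcont hmono hr
      (fun i j hij => hdisj i j hij) ht₀ htn
  have hsubL : Icc 0 y ⊆ Icc (0 : ℝ) 1 := Icc_subset_Icc le_rfl hy.2
  have hsubR : Icc y 1 ⊆ Icc (0 : ℝ) 1 := Icc_subset_Icc hy.1 le_rfl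
  have hL := exists_allocation_of_mul_lt (δ := 1 / n) ht₀ hcard hy.1
    (fun i => (hcont i).mono hsubL) (fun i => (hmono i).mono hsubL) fun i => by
      rw [h0, sub_zero, mul_one_div]; exact i.2
  have hR := exists_allocation_of_mul_lt (ι := {i // ¬(t : ℝ) / n < F i y}) (δ := 1 / n)
    (Nat.sub_pos_of_lt htn)
    (by rw [Fintype.card_subtype_compl, hcard, Fintype.card_fin]) hy.2
    (fun i => (hcont i).mono hsubR) (fun i => (hmono i).mono hsubR) fun i => by
      have := hright i i.2
      rw [h1, Nat.cast_sub htn.le, sub_mul, mul_one_div, mul_one_div, div_self hn₀.ne']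
      linarith
  have h := HasConnectedAllocation.append_sumCompl
    (Q := fun i a b => 1 / (n : ℝ) < F i b - F i a) _ hL hR
  rwa [Nat.add_sub_cancel' htn.le] at h

theorem stmt6 (n : ℕ) (hn : 1 ≤ n) (F : Fin n → ℝ → ℝ)
    (hcont : ∀ i, ContinuousOn (F i) (Icc 0 1))
    (hmono : ∀ i, MonotoneOn (F i) (Icc 0 1))
    (h0 : ∀ i, F i 0 = 0) (h1 : ∀ i, F i 1 = 1)
    (hdisj : ∃ t : ℕ, 0 < t ∧ t < n ∧ ∀ i j : Fin n, i ≠ j →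
      Disjoint {x ∈ Icc (0:ℝ) 1 | F i x = (t : ℝ) / (n : ℝ)}
               {x ∈ Icc (0:ℝ) 1 | F j x = (t : ℝ) / (n : ℝ)}) :
    ∃ x : Fin (n+1) → ℝ, Monotone x ∧ x 0 = 0 ∧ x (Fin.last n) = 1 ∧
      ∃ σ : Equiv.Perm (Fin n), ∀ k : Fin n,
        1 / (n : ℝ) < F (σ k) (x k.succ) - F (σ k) (x k.castSucc) :=
  stmt6_general n F hcont hmono h0 h1 hdisj
end

section
/- Let n ≥ 1 and F₁,…,Fₙ : [0,1] → [0,1] be continuous, non-decreasing, with Fᵢ(0)=0, Fᵢ(1)=1, and entitlements w₁,…,wₙ > 0 with Σwᵢ = 1. Define the rightmost-mark function rm_i(x, r) = sup { z ∈ [x,1] : Fᵢ(z) − Fᵢ(x) ≤ r } (which satisfies Fᵢ(rm_i(x,r)) − Fᵢ(x) = r whenever Fᵢ(1) − Fᵢ(x) ≥ r). For a permutation σ of {1,…,n}, define x₀ = 0 and x_k = rm_{σ(k)}(x_{k−1}, w_{σ(k)}) for k = 1,…,n (provided each is well-defined). Then a connected strongly-proportional allocation exists if and only if there exists a permutation σ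 for which all x_k are well-defined and x_n < 1. -/
open Set

/-- The rightmost `r`-mark of an agent with cumulative value `F`, starting at `x`. -/
noncomputable def rightMark (F : ℝ → ℝ) (x r : ℝ) : ℝ :=
  sSup {z | z ∈ Icc x 1 ∧ F z - F x ≤ r}

lemma rightMark_mem {F : ℝ → ℝ} {x r : ℝ} (hF : ContinuousOn F (Icc 0 1))
    (hx : x ∈ Icc 0 1) (hr : 0 ≤ r) :
    rightMark F x r ∈ Icc x 1 ∧ F (rightMark F x r) - F x ≤ r := by
  have hsub : Icc x 1 ⊆ Icc (0:ℝ) 1 := Icc_subset_Icc_left hx.1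
  have hSeq : {z | z ∈ Icc x 1 ∧ F z - F x ≤ r} = Icc x 1 ∩ F ⁻¹' (Iic (F x + r)) := by
    ext z; simp only [mem_setOf_eq, mem_inter_iff, mem_preimage, mem_Iic]
    constructor <;> rintro ⟨h1, h2⟩ <;> exact ⟨h1, by linarith⟩
  have hclosed : IsClosed {z | z ∈ Icc x 1 ∧ F z - F x ≤ r} := by
    rw [hSeq]
    exact (hF.mono hsub).preimage_isClosed_of_isClosed isClosed_Icc isClosed_Iic
  have hcpt : IsCompact {z | z ∈ Icc x 1 ∧ F z - F x ≤ r} :=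
    isCompact_Icc.of_isClosed_subset hclosed (fun z hz => hz.1)
  have hne : x ∈ {z | z ∈ Icc x 1 ∧ F z - F x ≤ r} :=
    ⟨⟨le_refl x, hx.2⟩, by simp [hr]⟩
  exact hcpt.sSup_mem ⟨x, hne⟩

lemma rightMark_lt {F : ℝ → ℝ} {x r : ℝ} {z : ℝ}
    (hxz : x ≤ z) (hz1 : z ≤ 1) (hmz : rightMark F x r < z) :
    r < F z - F x := by
  by_contra h
  push_neg at h
  have hzS : z ∈ {z | z ∈ Icc x 1 ∧ F z - F x ≤ r} := ⟨⟨hxz, hz1⟩, h⟩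
  have : z ≤ rightMark F x r :=
    le_csSup ((bddAbove_Icc (a := x) (b := (1:ℝ))).mono (fun t ht => ht.1)) hzS
  linarith

lemma rightMark_eq {F : ℝ → ℝ} {x r : ℝ} (hF : ContinuousOn F (Icc 0 1))
    (hx : x ∈ Icc 0 1) (hr : 0 ≤ r) (hwd : r ≤ F 1 - F x) :
    F (rightMark F x r) - F x = r := by
  obtain ⟨hm, hle⟩ := rightMark_mem hF hx hr
  set m := rightMark F x r with hmdef
  refine le_antisymm hle ?_
  by_contra h
  push_neg at h
  have hm01 : m ∈ Icc (0:ℝ) 1 := ⟨hx.1.trans hm.1, hm.2⟩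
  have hm1 : m < 1 := by
    rcases lt_or_eq_of_le hm.2 with h1 | h1
    · exact h1
    · rw [h1] at h; linarith
  have hcw : ContinuousWithinAt F (Icc 0 1) m := hF m hm01
  have hev : ∀ᶠ t in nhdsWithin m (Icc 0 1), F t - F x < r :=
    Filter.Tendsto.eventually_lt_const h ((hcw.sub continuousWithinAt_const).tendsto)
  have hsub2 : Ioo m 1 ⊆ Icc (0:ℝ) 1 := fun t ht => ⟨hm01.1.trans ht.1.le, ht.2.le⟩
  have hev2 : ∀ᶠ t in nhdsWithin m (Ioo m 1), F t - F x < r :=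
    hev.filter_mono (nhdsWithin_mono _ hsub2)
  have hne : (nhdsWithin m (Ioo m 1)).NeBot := by
    apply mem_closure_iff_nhdsWithin_neBot.mp
    rw [closure_Ioo (ne_of_lt hm1)]
    exact ⟨le_refl m, hm1.le⟩
  obtain ⟨t, htlt, htmem⟩ := (hev2.and self_mem_nhdsWithin).exists
  have : t ≤ m :=
    le_csSup ((bddAbove_Icc (a := x) (b := (1:ℝ))).mono (fun u hu => hu.1))
      ⟨⟨hm.1.trans htmem.1.le, htmem.2.le⟩, htlt.le⟩
  exact absurd this (not_le.mpr htmem.1)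

theorem stmt7 (n : ℕ) (hn : 1 ≤ n) (F : Fin n → ℝ → ℝ)
    (hcont : ∀ i, ContinuousOn (F i) (Icc 0 1))
    (hmono : ∀ i, MonotoneOn (F i) (Icc 0 1))
    (h0 : ∀ i, F i 0 = 0) (h1 : ∀ i, F i 1 = 1)
    (w : Fin n → ℝ) (hw : ∀ i, 0 < w i) (hsum : ∑ i, w i = 1) :
    (∃ y : Fin (n+1) → ℝ, Monotone y ∧ y 0 = 0 ∧ y (Fin.last n) = 1 ∧
        ∃ σ : Equiv.Perm (Fin n), ∀ k : Fin n,
          w (σ k) < F (σ k) (y k.succ) - F (σ k) (y k.castSucc)) ↔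
      (∃ σ : Equiv.Perm (Fin n), ∃ x : Fin (n+1) → ℝ, x 0 = 0 ∧
        (∀ k : Fin n, w (σ k) ≤ F (σ k) 1 - F (σ k) (x k.castSucc) ∧
          x k.succ = rightMark (F (σ k)) (x k.castSucc) (w (σ k))) ∧
        x (Fin.last n) < 1) := by
  constructor
  · rintro ⟨y, hymono, hy0, hylast, σ, hstrict⟩
    refine ⟨σ, ?_⟩
    have hy01 : ∀ i : Fin (n+1), 0 ≤ y i ∧ y i ≤ 1 :=
      fun i => ⟨hy0 ▸ hymono (Fin.zero_le i), hylast ▸ hymono (Fin.le_last i)⟩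
    set f : ℕ → ℝ := fun k => Nat.rec 0
      (fun k fk => if h : k < n then rightMark (F (σ ⟨k, h⟩)) fk (w (σ ⟨k, h⟩)) else 0) k
      with hfdef
    have hfs : ∀ k (h : k < n),
        f (k+1) = rightMark (F (σ ⟨k, h⟩)) (f k) (w (σ ⟨k, h⟩)) := by
      intro k h
      show (if h : k < n then rightMark (F (σ ⟨k, h⟩)) (f k) (w (σ ⟨k, h⟩)) else 0) = _
      rw [dif_pos h]
    -- the key step lemma: well-definedness at index k
    have step : ∀ k (hk : k < n), 0 ≤ f k → f k ≤ 1 →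
        f k ≤ y (⟨k, hk⟩ : Fin n).castSucc →
        w (σ ⟨k, hk⟩) ≤ F (σ ⟨k, hk⟩) 1 - F (σ ⟨k, hk⟩) (f k) := by
      intro k hk h0f h1f hfy
      set a := σ ⟨k, hk⟩ with ha
      have hyk := hy01 (⟨k, hk⟩ : Fin n).castSucc
      have hyk1 := hy01 (⟨k, hk⟩ : Fin n).succ
      have hA : F a (f k) ≤ F a (y (⟨k, hk⟩ : Fin n).castSucc) :=
        hmono a ⟨h0f, h1f⟩ ⟨hyk.1, hyk.2⟩ hfy
      have hB := hstrict ⟨k, hk⟩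
      have hC : F a (y (⟨k, hk⟩ : Fin n).succ) ≤ F a 1 :=
        hmono a ⟨hyk1.1, hyk1.2⟩ ⟨zero_le_one, le_refl 1⟩ hyk1.2
      rw [← ha] at hB
      linarith
    have claim : ∀ k (hk : k ≤ n), 0 ≤ f k ∧ f k ≤ 1 ∧
        f k ≤ y ⟨k, Nat.lt_succ_of_le hk⟩ ∧
        (0 < k → f k < y ⟨k, Nat.lt_succ_of_le hk⟩) := by
      intro k
      induction k with
      | zero =>
        intro _
        have : y ⟨0, Nat.lt_succ_of_le (Nat.zero_le n)⟩ = 0 := hy0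
        refine ⟨le_refl 0, zero_le_one, ?_, by omega⟩
        show (0:ℝ) ≤ y ⟨0, _⟩
        rw [show (⟨0, Nat.lt_succ_of_le (Nat.zero_le n)⟩ : Fin (n+1)) = 0 from rfl, hy0]
      | succ k ih =>
        intro hk1
        have hk : k < n := hk1
        obtain ⟨h0f, h1f, hfy, _⟩ := ih hk.le
        set a := σ ⟨k, hk⟩ with ha
        have hfycs : f k ≤ y (⟨k, hk⟩ : Fin n).castSucc := hfy
        have hwd := step k hk h0f h1f hfycs
        have hfk01 : f k ∈ Icc (0:ℝ) 1 := ⟨h0f, h1f⟩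
        have heq := rightMark_eq (hcont a) hfk01 (hw a).le hwd
        have hmem := (rightMark_mem (hcont a) hfk01 (hw a).le).1
        have hfk1 : f (k+1) = rightMark (F a) (f k) (w a) := hfs k hk
        rw [← hfk1] at heq hmem
        have h0f' : 0 ≤ f (k+1) := h0f.trans hmem.1
        have h1f' : f (k+1) ≤ 1 := hmem.2
        have hyk := hy01 (⟨k, hk⟩ : Fin n).castSucc
        have hyk1 := hy01 (⟨k, hk⟩ : Fin n).succ
        have hA : F a (f k) ≤ F a (y (⟨k, hk⟩ : Fin n).castSucc) :=
          hmono a hfk01 ⟨hyk.1, hyk.2⟩ hfycs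
        have hB := hstrict ⟨k, hk⟩
        rw [← ha] at hB
        have hFlt : F a (f (k+1)) < F a (y (⟨k, hk⟩ : Fin n).succ) := by linarith
        have hlt : f (k+1) < y (⟨k, hk⟩ : Fin n).succ := by
          by_contra hc
          push_neg at hc
          have := hmono a ⟨hyk1.1, hyk1.2⟩ ⟨h0f', h1f'⟩ hc
          linarith
        exact ⟨h0f', h1f', hlt.le, fun _ => hlt⟩
    refine ⟨fun i => f i.val, rfl, ?_, ?_⟩
    · intro k
      obtain ⟨h0f, h1f, hfy, _⟩ := claim k.val k.isLt.le
      constructor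
      · exact step k.val k.isLt h0f h1f hfy
      · exact hfs k.val k.isLt
    · obtain ⟨_, _, _, hstrictn⟩ := claim n (le_refl n)
      have hlast : y ⟨n, Nat.lt_succ_of_le (le_refl n)⟩ = 1 := hylast
      have := hstrictn (by omega)
      rw [hlast] at this
      exact this
  · rintro ⟨σ, x, hx0, hrec, hxlast⟩
    have xbound : ∀ k (hk : k ≤ n),
        0 ≤ x ⟨k, Nat.lt_succ_of_le hk⟩ ∧ x ⟨k, Nat.lt_succ_of_le hk⟩ ≤ 1 := by
      intro k
      induction k with
      | zero =>
        intro _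
        rw [show (⟨0, Nat.lt_succ_of_le (Nat.zero_le n)⟩ : Fin (n+1)) = 0 from rfl, hx0]
        exact ⟨le_refl 0, zero_le_one⟩
      | succ k ih =>
        intro hk1
        have hk : k < n := hk1
        obtain ⟨h0, h1⟩ := ih hk.le
        obtain ⟨hwd, hxeq⟩ := hrec ⟨k, hk⟩
        have hmem := (rightMark_mem (hcont (σ ⟨k, hk⟩))
          (⟨h0, h1⟩ : x (⟨k, hk⟩ : Fin n).castSucc ∈ Icc (0:ℝ) 1) (hw (σ ⟨k, hk⟩)).le).1
        rw [← hxeq] at hmem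
        exact ⟨h0.trans hmem.1, hmem.2⟩
    have xstep : ∀ k (hk : k < n),
        x (⟨k, hk⟩ : Fin n).castSucc ≤ x (⟨k, hk⟩ : Fin n).succ := by
      intro k hk
      obtain ⟨h0, h1⟩ := xbound k hk.le
      obtain ⟨hwd, hxeq⟩ := hrec ⟨k, hk⟩
      have hmem := (rightMark_mem (hcont (σ ⟨k, hk⟩))
        (⟨h0, h1⟩ : x (⟨k, hk⟩ : Fin n).castSucc ∈ Icc (0:ℝ) 1) (hw (σ ⟨k, hk⟩)).le).1
      rw [← hxeq] at hmem
      exact hmem.1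
    -- downward construction
    have key : ∀ d : ℕ, ∃ y : ℕ → ℝ, y n = 1 ∧
        (∀ i, n - d ≤ i → ∀ (h2 : i ≤ n),
          x ⟨i, Nat.lt_succ_of_le h2⟩ < y i ∧ y i ≤ 1) ∧
        (∀ i, n - d ≤ i → ∀ (h2 : i < n),
          y i ≤ y (i+1) ∧
          w (σ ⟨i, h2⟩) < F (σ ⟨i, h2⟩) (y (i+1)) - F (σ ⟨i, h2⟩) (y i)) := by
      intro d
      induction d with
      | zero =>
        refine ⟨fun _ => 1, rfl, ?_, ?_⟩
        · intro i hi h2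
          have hin : i = n := by omega
          refine ⟨?_, le_refl 1⟩
          have he : (⟨i, Nat.lt_succ_of_le h2⟩ : Fin (n+1)) = Fin.last n := by
            apply Fin.ext
            simpa using hin
          rw [he]
          exact hxlast
        · intro i hi h2
          omega
      | succ d ih =>
        obtain ⟨y, hy1, hyA, hyB⟩ := ih
        by_cases hdn : n ≤ d
        · exact ⟨y, hy1, fun i h1 h2 => hyA i (by omega) h2,
            fun i h1 h2 => hyB i (by omega) h2⟩
        · push_neg at hdn
          set k := n - d - 1 with hkd
          have hk : k < n := by omega
          have hk1 : k + 1 = n - d := by omega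
          set a := σ ⟨k, hk⟩ with ha
          obtain ⟨hwd, hxeq⟩ := hrec ⟨k, hk⟩
          rw [← ha] at hwd hxeq
          have xk01 := xbound k hk.le
          have hyk1 := hyA (k+1) (by omega) (by omega)
          have hxcs : x (⟨k, hk⟩ : Fin n).castSucc = x ⟨k, Nat.lt_succ_of_le hk.le⟩ := rfl
          have hxss : x (⟨k, hk⟩ : Fin n).succ = x ⟨k+1, Nat.lt_succ_of_le hk⟩ := rfl
          have hxk1lt : x (⟨k, hk⟩ : Fin n).succ < y (k+1) := by
            rw [hxss]; exact hyk1.1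
          have hxyk1 : x (⟨k, hk⟩ : Fin n).castSucc < y (k+1) :=
            lt_of_le_of_lt (xstep k hk) hxk1lt
          have hClt : w a < F a (y (k+1)) - F a (x (⟨k, hk⟩ : Fin n).castSucc) := by
            apply rightMark_lt hxyk1.le hyk1.2
            rw [← hxeq]; exact hxk1lt
          have hcw : ContinuousWithinAt (F a) (Icc 0 1) (x (⟨k, hk⟩ : Fin n).castSucc) :=
            hcont a _ ⟨xk01.1, xk01.2⟩
          have htend : Filter.Tendsto (fun t => F a (y (k+1)) - F a t)
              (nhdsWithin (x (⟨k, hk⟩ : Fin n).castSucc) (Icc 0 1))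
              (nhds (F a (y (k+1)) - F a (x (⟨k, hk⟩ : Fin n).castSucc))) :=
            ((continuousWithinAt_const (b := F a (y (k+1)))).sub hcw).tendsto
          have hev : ∀ᶠ t in nhdsWithin (x (⟨k, hk⟩ : Fin n).castSucc) (Icc 0 1),
              w a < F a (y (k+1)) - F a t :=
            htend.eventually_const_lt hClt
          have hsub2 : Ioo (x (⟨k, hk⟩ : Fin n).castSucc) (y (k+1)) ⊆ Icc (0:ℝ) 1 :=
            fun t ht => ⟨xk01.1.trans ht.1.le, ht.2.le.trans hyk1.2⟩
          have hev2 := hev.filter_mono (nhdsWithin_mono _ hsub2)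
          have hnb : (nhdsWithin (x (⟨k, hk⟩ : Fin n).castSucc)
              (Ioo (x (⟨k, hk⟩ : Fin n).castSucc) (y (k+1)))).NeBot := by
            apply mem_closure_iff_nhdsWithin_neBot.mp
            rw [closure_Ioo (ne_of_lt hxyk1)]
            exact ⟨le_refl _, hxyk1.le⟩
          obtain ⟨t, htlt, htmem⟩ := (hev2.and self_mem_nhdsWithin).exists
          refine ⟨Function.update y k t, ?_, ?_, ?_⟩
          · rw [Function.update_of_ne (by omega : n ≠ k)]; exact hy1
          · intro i h1 h2
            by_cases hik : i = k
            · subst hik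
              rw [Function.update_self]
              constructor
              · exact htmem.1
              · exact htmem.2.le.trans hyk1.2
            · rw [Function.update_of_ne hik]
              exact hyA i (by omega) h2
          · intro i h1 h2
            by_cases hik : i = k
            · subst hik
              rw [Function.update_self, Function.update_of_ne (by omega : k + 1 ≠ k)]
              exact ⟨htmem.2.le, htlt⟩
            · rw [Function.update_of_ne hik, Function.update_of_ne (by omega : i + 1 ≠ k)]
              exact hyB i (by omega) h2
    obtain ⟨y, hy1, hyA, hyB⟩ := key (n-1)
    have hbound : n - (n - 1) = 1 := by omega
    have hy1pos : 0 ≤ y 1 := by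
      have := hyA 1 (by omega) hn
      have h0x := (xbound 1 hn).1
      linarith
    refine ⟨fun i : Fin (n+1) => if i.val = 0 then 0 else y i.val, ?_, ?_, ?_, σ, ?_⟩
    · apply Fin.monotone_iff_le_succ.mpr
      intro k
      have hsv : (k.succ).val = k.val + 1 := rfl
      show (if (k.castSucc).val = 0 then (0:ℝ) else y (k.castSucc).val) ≤
        (if (k.succ).val = 0 then (0:ℝ) else y (k.succ).val)
      by_cases hkv : k.val = 0
      · rw [if_pos (show (k.castSucc).val = 0 from hkv),
            if_neg (show ¬ (k.succ).val = 0 from by rw [hsv]; omega)]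
        rw [hsv, hkv]
        exact hy1pos
      · rw [if_neg (show ¬ (k.castSucc).val = 0 from hkv),
            if_neg (show ¬ (k.succ).val = 0 from by rw [hsv]; omega)]
        rw [hsv]
        exact (hyB k.val (by omega) k.isLt).1
    · simp
    · have : (Fin.last n).val = n := rfl
      simp only [this, if_neg (by omega : n ≠ 0)]
      exact hy1
    · intro k
      have hsv : (k.succ).val = k.val + 1 := rfl
      show w (σ k) < F (σ k) (if (k.succ).val = 0 then (0:ℝ) else y (k.succ).val) -
        F (σ k) (if (k.castSucc).val = 0 then (0:ℝ) else y (k.castSucc).val)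
      by_cases hkv : k.val = 0
      · rw [if_pos (show (k.castSucc).val = 0 from hkv),
            if_neg (show ¬ (k.succ).val = 0 from by rw [hsv]; omega)]
        rw [hsv, hkv]
        -- piece 0: use rightmost property from x 0 = 0
        have hkeq : k = ⟨0, by omega⟩ := Fin.ext hkv
        obtain ⟨hwd, hxeq⟩ := hrec k
        have hxcs0 : x k.castSucc = 0 := by
          rw [hkeq]
          exact hx0
        have hyk1 := hyA 1 (by omega) hn
        have hxk1lt : x k.succ < y 1 := by
          rw [hkeq]
          exact hyk1.1
        have := rightMark_lt (r := w (σ k)) (F := F (σ k)) (x := x k.castSucc)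
          (by rw [hxcs0]; exact hy1pos) hyk1.2 (by rw [← hxeq]; exact hxk1lt)
        rw [hxcs0] at this
        exact this
      · rw [if_neg (show ¬ (k.castSucc).val = 0 from hkv),
            if_neg (show ¬ (k.succ).val = 0 from by rw [hsv]; omega)]
        rw [hsv]
        exact (hyB k.val (by omega) k.isLt).2
end

section
/- Let n ≥ 1, let F₁,…,Fₙ : [0,1] → [0,1] be continuous non-decreasing with Fᵢ(0)=0, Fᵢ(1)=1, and entitlements w₁,…,wₙ > 0 summing to 1. Suppose a connected strongly-proportional allocation exists, with agent σ(k) receiving piece [y_{k−1}, y_k] worth strictly more than w_{σ(k)}, where 0 = y₀ ≤ ⋯ ≤ yₙ = 1. Define x₀ = 0 and x_k as the rightmost point z with F_{σ(k)}(z) − F_{σ(k)}(x_{k−1}) = w_{σ(k)}. Then each x_k is well-defined and x_k < y_k for all k ∈ {1,…,n}; in particular x_n < 1. -/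
open Set

theorem stmt9 (n : ℕ) (hn : 1 ≤ n) (F : Fin n → ℝ → ℝ)
    (hcont : ∀ i, ContinuousOn (F i) (Icc 0 1))
    (hmono : ∀ i, MonotoneOn (F i) (Icc 0 1))
    (h0 : ∀ i, F i 0 = 0) (h1 : ∀ i, F i 1 = 1)
    (w : Fin n → ℝ) (hw : ∀ i, 0 < w i) (hsum : ∑ i, w i = 1)
    (σ : Equiv.Perm (Fin n)) (y : Fin (n+1) → ℝ)
    (hymono : Monotone y) (hy0 : y 0 = 0) (hyn : y (Fin.last n) = 1)
    (hsp : ∀ k : Fin n, w (σ k) < F (σ k) (y k.succ) - F (σ k) (y k.castSucc))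
    (x : Fin (n+1) → ℝ) (hx0 : x 0 = 0)
    (hxrec : ∀ k : Fin n, x k.succ = rightMark (F (σ k)) (x k.castSucc) (w (σ k))) :
    (∀ k : Fin n, w (σ k) ≤ F (σ k) 1 - F (σ k) (x k.castSucc) ∧
      x k.succ < y k.succ) ∧ x (Fin.last n) < 1 := by
  -- the mark lies in the defining set
  have mark : ∀ (G : ℝ → ℝ), ContinuousOn G (Icc 0 1) → ∀ a r : ℝ, a ∈ Icc (0:ℝ) 1 → 0 ≤ r →
      rightMark G a r ∈ {z | z ∈ Icc a 1 ∧ G z - G a ≤ r} := by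
    intro G hG a r ha hr
    set S : Set ℝ := {z | z ∈ Icc a 1 ∧ G z - G a ≤ r} with hSdef
    have hsub : S ⊆ Icc a 1 := fun z hz => hz.1
    have hSeq : S = Icc a 1 ∩ G ⁻¹' (Iic (G a + r)) := by
      ext z
      simp only [hSdef, mem_setOf_eq, mem_inter_iff, mem_preimage, mem_Iic]
      constructor
      · rintro ⟨h1, h2⟩; exact ⟨h1, by linarith⟩
      · rintro ⟨h1, h2⟩; exact ⟨h1, by linarith⟩
    have hclosed : IsClosed S := by
      rw [hSeq]
      exact (hG.mono (Icc_subset_Icc ha.1 le_rfl)).preimage_isClosed_of_isClosed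
        isClosed_Icc isClosed_Iic
    have hcomp : IsCompact S := (isCompact_Icc (a := a) (b := 1)).of_isClosed_subset hclosed hsub
    have hne : S.Nonempty := ⟨a, ⟨le_rfl, ha.2⟩, by simp [hr]⟩
    exact hcomp.sSup_mem hne
  -- the key step
  have step : ∀ k : Fin n, x k.castSucc ∈ Icc (0:ℝ) 1 → x k.castSucc ≤ y k.castSucc →
      (w (σ k) ≤ F (σ k) 1 - F (σ k) (x k.castSucc)) ∧ x k.succ < y k.succ ∧
        x k.succ ∈ Icc (0:ℝ) 1 := by
    intro k hx hxy
    have hy1 : y k.castSucc ∈ Icc (0:ℝ) 1 :=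
      ⟨by rw [← hy0]; exact hymono (Fin.zero_le _), by rw [← hyn]; exact hymono (Fin.le_last _)⟩
    have hy2 : y k.succ ∈ Icc (0:ℝ) 1 :=
      ⟨by rw [← hy0]; exact hymono (Fin.zero_le _), by rw [← hyn]; exact hymono (Fin.le_last _)⟩
    have h1mem : (1:ℝ) ∈ Icc (0:ℝ) 1 := right_mem_Icc.mpr zero_le_one
    have hF1 : F (σ k) (y k.succ) ≤ F (σ k) 1 := hmono _ hy2 h1mem hy2.2
    have hF2 : F (σ k) (x k.castSucc) ≤ F (σ k) (y k.castSucc) := hmono _ hx hy1 hxy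
    have hspk := hsp k
    have hfeas : w (σ k) ≤ F (σ k) 1 - F (σ k) (x k.castSucc) := by linarith
    have hm := mark (F (σ k)) (hcont _) _ (w (σ k)) hx (le_of_lt (hw _))
    rw [← hxrec k] at hm
    obtain ⟨hm1, hm2⟩ := hm
    have hxs : x k.succ ∈ Icc (0:ℝ) 1 := ⟨le_trans hx.1 hm1.1, hm1.2⟩
    have hlt : x k.succ < y k.succ := by
      by_contra h
      push_neg at h
      have : F (σ k) (y k.succ) ≤ F (σ k) (x k.succ) := hmono _ hy2 hxs h
      linarith
    exact ⟨hfeas, hlt, hxs⟩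
  -- invariant
  have inv : ∀ i : Fin (n+1), x i ∈ Icc (0:ℝ) 1 ∧ x i ≤ y i := by
    intro i
    induction i using Fin.induction with
    | zero => rw [hx0, hy0]; exact ⟨⟨le_rfl, zero_le_one⟩, le_rfl⟩
    | succ k ih =>
      obtain ⟨h1, h2⟩ := ih
      obtain ⟨_, hlt, hmem⟩ := step k h1 h2
      exact ⟨hmem, le_of_lt hlt⟩
  have main : ∀ k : Fin n, w (σ k) ≤ F (σ k) 1 - F (σ k) (x k.castSucc) ∧
      x k.succ < y k.succ := by
    intro k
    obtain ⟨h1, h2⟩ := inv k.castSucc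
    obtain ⟨ha, hb, _⟩ := step k h1 h2
    exact ⟨ha, hb⟩
  refine ⟨main, ?_⟩
  have hk : (n - 1 : ℕ) < n := Nat.sub_lt hn one_pos
  have hsucc : (⟨n - 1, hk⟩ : Fin n).succ = Fin.last n := by
    ext; simp [Nat.sub_add_cancel hn]
  have := (main ⟨n - 1, hk⟩).2
  rw [hsucc] at this
  rwa [hyn] at this
end

section
/- Let n ≥ 1 and F₁,…,Fₙ : [0,1] → [0,1] be continuous non-decreasing with Fᵢ(0)=0, Fᵢ(1)=1, and entitlements w₁,…,wₙ. For each subset N ⊆ {1,…,n}, define b_N recursively by b_∅ = 0 and b_N = min over i ∈ N of rm_i(b_{N∖{i}}, wᵢ), where rm_i(x, r) is the rightmost z with Fᵢ(z) − Fᵢ(x) = r (and rm_i(x,r) = ∞ if Fᵢ(1) − Fᵢ(x) < r, with ∞ propagating through). Then b_{{1,…,n}} equals the minimum over all permutations σ of the sequential rightmost mark x_n^σ obtained by applying the agents' rightmost entitlement-marks in the order σ(1),…,σ(n) starting from 0. In particular, b_{{1,…,n}} < 1 if and only if there exists a permutation σ with x_n^σ < 1. -/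
open Set

/-- The rightmost `r`-mark, extended with `⊤` (the "∞" answer): if the starting
point is already `⊤`, or if the remaining cake is worth less than `r`, the
answer is `⊤`; `⊤` propagates through. -/
noncomputable def rightMarkTop (F : ℝ → ℝ) (r : ℝ) : WithTop ℝ → WithTop ℝ :=
  WithTop.recTopCoe ⊤ (fun x => if F 1 - F x < r then ⊤ else ((rightMark F x r : ℝ) : WithTop ℝ))

lemma rm_mem {F : ℝ → ℝ} {x r : ℝ} (hx : x ∈ Icc (0:ℝ) 1) (hr : 0 ≤ r) :
    rightMark F x r ∈ Icc x 1 := by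
  have hxA : x ∈ {z | z ∈ Icc x 1 ∧ F z - F x ≤ r} :=
    ⟨⟨le_refl x, hx.2⟩, by simpa using hr⟩
  have hbdd : BddAbove {z | z ∈ Icc x 1 ∧ F z - F x ≤ r} :=
    ⟨1, fun z hz => hz.1.2⟩
  exact ⟨le_csSup hbdd hxA, Real.sSup_le (fun z hz => hz.1.2) zero_le_one⟩

lemma rm_mono {F : ℝ → ℝ} (hF : MonotoneOn F (Icc 0 1)) {x y r : ℝ}
    (hx : x ∈ Icc (0:ℝ) 1) (hy : y ∈ Icc (0:ℝ) 1) (hxy : x ≤ y) (hr : 0 ≤ r) :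
    rightMark F x r ≤ rightMark F y r := by
  have hyB : y ∈ {z | z ∈ Icc y 1 ∧ F z - F y ≤ r} := ⟨⟨le_refl y, hy.2⟩, by simpa using hr⟩
  have hbddB : BddAbove {z | z ∈ Icc y 1 ∧ F z - F y ≤ r} := ⟨1, fun z hz => hz.1.2⟩
  have hy_le : y ≤ rightMark F y r := le_csSup hbddB hyB
  apply Real.sSup_le _ (hy.1.trans hy_le)
  intro z hz
  rcases le_total z y with hzy | hyz
  · exact hzy.trans hy_le
  · apply le_csSup hbddB
    refine ⟨⟨hyz, hz.1.2⟩, ?_⟩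
    have hFxy : F x ≤ F y := hF hx hy hxy
    have := hz.2
    linarith

theorem stmt13 (n : ℕ) (hn : 1 ≤ n) (F : Fin n → ℝ → ℝ)
    (hcont : ∀ i, ContinuousOn (F i) (Icc 0 1))
    (hmono : ∀ i, MonotoneOn (F i) (Icc 0 1))
    (h0 : ∀ i, F i 0 = 0) (h1 : ∀ i, F i 1 = 1)
    (w : Fin n → ℝ) (hw : ∀ i, 0 < w i) (hsum : ∑ i, w i = 1)
    -- `b` satisfies the dynamic-programming recursion
    (b : Finset (Fin n) → WithTop ℝ)
    (hb0 : b ∅ = (0 : WithTop ℝ))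
    (hbrec : ∀ N : Finset (Fin n), N.Nonempty →
      b N = N.inf fun i => rightMarkTop (F i) (w i) (b (N.erase i)))
    -- `xs σ` is the sequence of sequential rightmost marks along permutation `σ`
    (xs : Equiv.Perm (Fin n) → Fin (n+1) → WithTop ℝ)
    (hxs0 : ∀ σ, xs σ 0 = (0 : WithTop ℝ))
    (hxsrec : ∀ σ, ∀ k : Fin n,
      xs σ k.succ = rightMarkTop (F (σ k)) (w (σ k)) (xs σ k.castSucc)) :
    b Finset.univ =
      (Finset.univ : Finset (Equiv.Perm (Fin n))).inf (fun σ => xs σ (Fin.last n)) ∧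
    (b Finset.univ < (1 : WithTop ℝ) ↔
      ∃ σ : Equiv.Perm (Fin n), xs σ (Fin.last n) < (1 : WithTop ℝ)) := by
  classical
  set S : Set (WithTop ℝ) := insert ⊤ ((fun t : ℝ => (t : WithTop ℝ)) '' Icc 0 1) with hS
  have h0S : (0 : WithTop ℝ) ∈ S := Or.inr ⟨0, ⟨le_refl 0, zero_le_one⟩, rfl⟩
  -- `rightMarkTop` maps `S` into `S`
  have hrmS : ∀ i : Fin n, ∀ x ∈ S, rightMarkTop (F i) (w i) x ∈ S := by
    intro i x hx
    rcases hx with rfl | ⟨t, ht, rfl⟩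
    · exact Or.inl rfl
    · show rightMarkTop (F i) (w i) (t : WithTop ℝ) ∈ S
      rw [rightMarkTop, WithTop.recTopCoe_coe]
      split
      · exact Or.inl rfl
      · have := rm_mem (F := F i) (r := w i) ht (hw i).le
        exact Or.inr ⟨_, ⟨ht.1.trans this.1, this.2⟩, rfl⟩
  -- `rightMarkTop` is monotone on `S`
  have hrmMono : ∀ i : Fin n, ∀ x ∈ S, ∀ y ∈ S, x ≤ y →
      rightMarkTop (F i) (w i) x ≤ rightMarkTop (F i) (w i) y := by
    intro i x hx y hy hxy
    rcases hy with rfl | ⟨t, ht, rfl⟩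
    · exact le_top
    · rcases hx with rfl | ⟨s, hs, rfl⟩
      · exact absurd (top_le_iff.mp hxy) (by simp)
      · have hst : s ≤ t := WithTop.coe_le_coe.mp hxy
        show rightMarkTop (F i) (w i) (s : WithTop ℝ) ≤ rightMarkTop (F i) (w i) (t : WithTop ℝ)
        simp only [rightMarkTop, WithTop.recTopCoe_coe]
        by_cases htc : F i 1 - F i t < w i
        · rw [if_pos htc]; exact le_top
        · have hFst : F i s ≤ F i t := hmono i hs ht hst
          have hsc : ¬ (F i 1 - F i s < w i) := by push_neg at htc ⊢; linarith
          rw [if_neg htc, if_neg hsc]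
          exact_mod_cast rm_mono (hmono i) hs ht hst (hw i).le
  -- all `b N` lie in `S`
  have hbS : ∀ (k : ℕ) (N : Finset (Fin n)), N.card = k → b N ∈ S := by
    intro k
    induction k with
    | zero =>
      intro N hN
      rw [Finset.card_eq_zero.mp hN, hb0]; exact h0S
    | succ k ih =>
      intro N hN
      have hne : N.Nonempty := Finset.card_pos.mp (hN ▸ k.succ_pos)
      obtain ⟨i0, hi0, heq⟩ :=
        Finset.exists_mem_eq_inf' hne (fun i => rightMarkTop (F i) (w i) (b (N.erase i)))
      rw [hbrec N hne, ← Finset.inf'_eq_inf hne, heq]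
      exact hrmS i0 _ (ih _ (by rw [Finset.card_erase_of_mem hi0, hN]; rfl))
  have hbS' : ∀ N : Finset (Fin n), b N ∈ S := fun N => hbS N.card N rfl
  -- all `xs σ k` lie in `S`
  have hxsS : ∀ σ : Equiv.Perm (Fin n), ∀ k : Fin (n+1), xs σ k ∈ S := by
    intro σ k
    induction k using Fin.induction with
    | zero => rw [hxs0]; exact h0S
    | succ k ih => rw [hxsrec σ k]; exact hrmS _ _ ih
  -- key inequality 1 : b of the first-k image is ≤ the k-th sequential mark
  have key1 : ∀ σ : Equiv.Perm (Fin n), ∀ k : ℕ, ∀ hk : k ≤ n,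
      b (Finset.image σ (Finset.univ.filter fun j : Fin n => (j:ℕ) < k)) ≤
        xs σ ⟨k, Nat.lt_succ_of_le hk⟩ := by
    intro σ k
    induction k with
    | zero =>
      intro _
      have h1' : (Finset.univ.filter fun j : Fin n => (j:ℕ) < 0) = ∅ := by
        apply Finset.filter_false_of_mem; intro j _; exact Nat.not_lt_zero _
      rw [h1', Finset.image_empty, hb0, show (⟨0, Nat.lt_succ_of_le (Nat.zero_le n)⟩ : Fin (n+1)) = 0 from rfl, hxs0]
    | succ k ih =>
      intro hk1
      have hkn : k < n := Nat.lt_of_succ_le hk1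
      set q : Fin n := ⟨k, hkn⟩ with hq
      set Nk : Finset (Fin n) := Finset.image σ (Finset.univ.filter fun j : Fin n => (j:ℕ) < k) with hNk
      have hfil : (Finset.univ.filter fun j : Fin n => (j:ℕ) < k+1) =
          insert q (Finset.univ.filter fun j : Fin n => (j:ℕ) < k) := by
        ext j
        simp only [Finset.mem_filter, Finset.mem_univ, true_and, Finset.mem_insert]
        constructor
        · intro h
          rcases Nat.lt_succ_iff_lt_or_eq.mp h with h | h
          · exact Or.inr h
          · exact Or.inl (Fin.ext h)
        · rintro (rfl | h)
          · exact Nat.lt_succ_self k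
          · exact Nat.lt_succ_of_lt h
      have himg : Finset.image σ (Finset.univ.filter fun j : Fin n => (j:ℕ) < k+1) =
          insert (σ q) Nk := by rw [hfil, Finset.image_insert]
      have hnotmem : σ q ∉ Nk := by
        rw [hNk]
        simp only [Finset.mem_image, Finset.mem_filter, Finset.mem_univ, true_and, not_exists]
        rintro j ⟨hj, hσj⟩
        have : j = q := σ.injective hσj
        rw [this] at hj
        exact absurd hj (lt_irrefl k)
      have hneI : (insert (σ q) Nk).Nonempty := Finset.insert_nonempty _ _
      have hstep1 : b (insert (σ q) Nk) ≤
          rightMarkTop (F (σ q)) (w (σ q)) (b ((insert (σ q) Nk).erase (σ q))) := by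
        rw [hbrec _ hneI]
        exact Finset.inf_le (Finset.mem_insert_self _ _)
      rw [himg]
      rw [Finset.erase_insert hnotmem] at hstep1
      have hstep2 : rightMarkTop (F (σ q)) (w (σ q)) (b Nk) ≤
          rightMarkTop (F (σ q)) (w (σ q)) (xs σ ⟨k, Nat.lt_succ_of_le hkn.le⟩) :=
        hrmMono _ _ (hbS' _) _ (hxsS _ _) (ih hkn.le)
      have hstep3 : rightMarkTop (F (σ q)) (w (σ q)) (xs σ ⟨k, Nat.lt_succ_of_le hkn.le⟩) =
          xs σ ⟨k+1, Nat.lt_succ_of_le hk1⟩ := by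
        have := hxsrec σ q
        rw [hq, Fin.succ_mk, Fin.castSucc_mk] at this
        exact this.symm
      exact hstep1.trans (hstep2.trans_eq hstep3)
  -- direction ≤
  have hle : b Finset.univ ≤
      (Finset.univ : Finset (Equiv.Perm (Fin n))).inf (fun σ => xs σ (Fin.last n)) := by
    apply Finset.le_inf
    intro σ _
    have h := key1 σ n le_rfl
    have hfil : (Finset.univ.filter fun j : Fin n => (j:ℕ) < n) = Finset.univ := by
      apply Finset.filter_true_of_mem; intro j _; exact j.is_lt
    rw [hfil, Finset.image_univ_equiv] at h
    exact h
  -- key inequality 2 : existence of a permutation achieving b N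
  have key2 : ∀ k : ℕ, ∀ hk : k ≤ n, ∀ N : Finset (Fin n), N.card = k →
      ∃ σ : Equiv.Perm (Fin n), (∀ j : Fin n, (j:ℕ) < k → σ j ∈ N) ∧
        xs σ ⟨k, Nat.lt_succ_of_le hk⟩ ≤ b N := by
    intro k
    induction k with
    | zero =>
      intro _ N hN
      refine ⟨1, fun j hj => absurd hj (Nat.not_lt_zero _), ?_⟩
      rw [Finset.card_eq_zero.mp hN, hb0,
        show (⟨0, Nat.lt_succ_of_le (Nat.zero_le n)⟩ : Fin (n+1)) = 0 from rfl, hxs0]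
    | succ k ih =>
      intro hk1 N hN
      have hkn : k < n := Nat.lt_of_succ_le hk1
      have hne : N.Nonempty := Finset.card_pos.mp (hN ▸ k.succ_pos)
      obtain ⟨i0, hi0, heq⟩ :=
        Finset.exists_mem_eq_inf' hne (fun i => rightMarkTop (F i) (w i) (b (N.erase i)))
      have hbN : b N = rightMarkTop (F i0) (w i0) (b (N.erase i0)) := by
        rw [hbrec N hne, ← Finset.inf'_eq_inf hne, heq]
      have hMcard : (N.erase i0).card = k := by
        rw [Finset.card_erase_of_mem hi0, hN]; rfl
      obtain ⟨σ', hσ'mem, hσ'le⟩ := ih hkn.le (N.erase i0) hMcard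
      set p : Fin n := σ'⁻¹ i0 with hp
      have hσ'p : σ' p = i0 := by simp [hp]
      have hpk : k ≤ (p : ℕ) := by
        by_contra h
        push_neg at h
        have := hσ'mem p h
        rw [hσ'p] at this
        exact Finset.notMem_erase i0 N this
      set q : Fin n := ⟨k, hkn⟩ with hq
      set σ : Equiv.Perm (Fin n) := σ' * Equiv.swap q p with hσ
      have hagree : ∀ j : Fin n, (j:ℕ) < k → σ j = σ' j := by
        intro j hj
        have hjq : j ≠ q := by
          intro h; rw [h] at hj; exact absurd hj (lt_irrefl k)
        have hjp : j ≠ p := by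
          intro h; rw [h] at hj; exact absurd (hpk.trans_lt hj) (lt_irrefl _)
        rw [hσ]
        show σ' (Equiv.swap q p j) = σ' j
        rw [Equiv.swap_apply_of_ne_of_ne hjq hjp]
      have hσq : σ q = i0 := by
        rw [hσ]
        show σ' (Equiv.swap q p q) = i0
        rw [Equiv.swap_apply_left, hσ'p]
      have hxs_eq : ∀ m : ℕ, m ≤ k → ∀ hm : m < n+1, xs σ ⟨m, hm⟩ = xs σ' ⟨m, hm⟩ := by
        intro m
        induction m with
        | zero =>
          intro _ hm
          rw [show (⟨0, hm⟩ : Fin (n+1)) = 0 from rfl, hxs0, hxs0]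
        | succ m ihm =>
          intro hmk hm
          have hmn : m < n := lt_of_lt_of_le (Nat.lt_of_succ_le hmk) hkn.le
          have h1' := hxsrec σ ⟨m, hmn⟩
          have h2' := hxsrec σ' ⟨m, hmn⟩
          rw [Fin.succ_mk, Fin.castSucc_mk] at h1' h2'
          have hmk' : m ≤ k := (Nat.le_of_succ_le hmk)
          rw [show (⟨m+1, hm⟩ : Fin (n+1)) = ⟨m+1, Nat.succ_lt_succ hmn⟩ from rfl, h1', h2',
            hagree _ (Nat.lt_of_succ_le hmk), ihm hmk' (Nat.lt_succ_of_lt hmn)]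
      refine ⟨σ, ?_, ?_⟩
      · intro j hj
        rcases Nat.lt_succ_iff_lt_or_eq.mp hj with hj | hj
        · rw [hagree j hj]
          exact Finset.mem_of_mem_erase (hσ'mem j hj)
        · have : j = q := Fin.ext hj
          rw [this, hσq]; exact hi0
      · have hstep := hxsrec σ q
        rw [hq, Fin.succ_mk, Fin.castSucc_mk] at hstep
        rw [show (⟨k+1, Nat.lt_succ_of_le hk1⟩ : Fin (n+1)) = ⟨k+1, Nat.succ_lt_succ hkn⟩ from rfl,
          hstep, hσq, hxs_eq k le_rfl (Nat.lt_succ_of_lt hkn), hbN]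
        exact hrmMono i0 _ (hxsS _ _) _ (hbS' _) hσ'le
  -- direction ≥
  have hge : (Finset.univ : Finset (Equiv.Perm (Fin n))).inf (fun σ => xs σ (Fin.last n)) ≤
      b Finset.univ := by
    obtain ⟨σ, _, hle'⟩ := key2 n le_rfl Finset.univ (by simp)
    exact (Finset.inf_le (Finset.mem_univ σ)).trans hle'
  have hmain : b Finset.univ =
      (Finset.univ : Finset (Equiv.Perm (Fin n))).inf (fun σ => xs σ (Fin.last n)) :=
    le_antisymm hle hge
  refine ⟨hmain, ?_⟩
  rw [hmain, Finset.inf_lt_iff]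
  simp
end

section
/- Let n ≥ 3, and for i ∈ {1,…,n−1} let w'ᵢ = (M + 2^{i−1}) / ((n−1)M + 2^{n−1} − 1), where M ≥ 2ⁿ·n² is a constant. Then: (a) Σ_{i=1}^{n−1} w'ᵢ = 1; (b) the entitlements w'₁,…,w'_{n−1} are generic, i.e., for all distinct subsets N, N' of {1,…,n−1}, Σ_{i∈N} w'ᵢ ≠ Σ_{i∈N'} w'ᵢ; and (c) with aᵢ = 1/(n·w'ᵢ), for each i we have aᵢ/(n−2) > 1 − aᵢ > 0. -/
open Finset

set_option maxHeartbeats 1600000 in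
theorem stmt18 (n : ℕ) (hn : 3 ≤ n) (M : ℝ) (hM : (2:ℝ)^n * (n:ℝ)^2 ≤ M) :
    (∑ i : Fin (n-1), (M + 2^(i:ℕ)) / (((n:ℝ) - 1) * M + 2^(n-1) - 1) = 1) ∧
    (∀ N N' : Finset (Fin (n-1)), N ≠ N' →
      ∑ i ∈ N, (M + 2^(i:ℕ)) / (((n:ℝ) - 1) * M + 2^(n-1) - 1) ≠
      ∑ i ∈ N', (M + 2^(i:ℕ)) / (((n:ℝ) - 1) * M + 2^(n-1) - 1)) ∧
    (∀ i : Fin (n-1),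
      (1 / ((n:ℝ) * ((M + 2^(i:ℕ)) / (((n:ℝ) - 1) * M + 2^(n-1) - 1)))) / ((n:ℝ) - 2) >
        1 - 1 / ((n:ℝ) * ((M + 2^(i:ℕ)) / (((n:ℝ) - 1) * M + 2^(n-1) - 1))) ∧
      1 - 1 / ((n:ℝ) * ((M + 2^(i:ℕ)) / (((n:ℝ) - 1) * M + 2^(n-1) - 1))) > 0) := by
  have hn3 : (3:ℝ) ≤ (n:ℝ) := by exact_mod_cast hn
  have hpow : (2:ℝ)^(n-1) ≤ (2:ℝ)^n := by
    apply pow_le_pow_right₀ (by norm_num) (Nat.sub_le n 1)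
  have hn2sq : (9:ℝ) ≤ (n:ℝ)^2 := by nlinarith
  have h2n : (2:ℝ)^n ≤ M := by nlinarith [pow_pos (by norm_num : (0:ℝ)<2) n, hn2sq]
  have h1le : (1:ℝ) ≤ 2^(n-1) := by
    calc (1:ℝ) = 2^0 := by norm_num
    _ ≤ 2^(n-1) := pow_le_pow_right₀ one_le_two (Nat.zero_le _)
  have hMpos : (0:ℝ) < M := lt_of_lt_of_le (pow_pos (by norm_num) n) h2n
  have hD : (0:ℝ) < ((n:ℝ) - 1) * M + 2^(n-1) - 1 := by
    nlinarith [h1le]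
  set D : ℝ := ((n:ℝ) - 1) * M + 2^(n-1) - 1 with hDdef
  -- sum of 2^i over Fin (n-1)
  have hsum2 : ∑ i : Fin (n-1), (2:ℝ)^(i:ℕ) = 2^(n-1) - 1 := by
    rw [Fin.sum_univ_eq_sum_range (fun i => (2:ℝ)^i)]
    rw [geom_sum_eq (by norm_num : (2:ℝ) ≠ 1)]
    ring
  have hcard : (Finset.univ : Finset (Fin (n-1))).card = n - 1 := by simp
  have hcast : ((n - 1 : ℕ) : ℝ) = (n:ℝ) - 1 := by
    have : 1 ≤ n := by omega
    push_cast [this]; ring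
  refine ⟨?_, ?_, ?_⟩
  · rw [← Finset.sum_div, Finset.sum_add_distrib, Finset.sum_const, hcard, hsum2,
      nsmul_eq_mul, hcast]
    field_simp
    rw [hDdef]; ring
  · -- genericity
    intro N N' hne heq
    apply hne
    rw [← Finset.sum_div, ← Finset.sum_div, div_eq_div_iff hD.ne' hD.ne'] at heq
    have heq2 : ∑ i ∈ N, (M + 2^(i:ℕ)) = ∑ i ∈ N', (M + (2:ℝ)^(i:ℕ)) := by
      have := mul_right_cancel₀ hD.ne' heq
      exact this
    rw [Finset.sum_add_distrib, Finset.sum_add_distrib, Finset.sum_const, Finset.sum_const,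
      nsmul_eq_mul, nsmul_eq_mul] at heq2
    -- bounds on the power sums
    have hb : ∀ S : Finset (Fin (n-1)), ∑ i ∈ S, (2:ℝ)^(i:ℕ) ≤ 2^(n-1) - 1 ∧
        0 ≤ ∑ i ∈ S, (2:ℝ)^(i:ℕ) := by
      intro S
      constructor
      · calc ∑ i ∈ S, (2:ℝ)^(i:ℕ) ≤ ∑ i : Fin (n-1), (2:ℝ)^(i:ℕ) := by
              apply Finset.sum_le_sum_of_subset_of_nonneg (Finset.subset_univ S)
              intros; positivity
          _ = 2^(n-1) - 1 := hsum2
      · apply Finset.sum_nonneg; intros; positivity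
    have hMbig : (2:ℝ)^(n-1) - 1 < M := by nlinarith
    have hcards : N.card = N'.card := by
      by_contra hc
      rcases lt_or_gt_of_ne hc with h | h
      · have h1 : (N.card : ℝ) + 1 ≤ N'.card := by exact_mod_cast h
        nlinarith [(hb N).1, (hb N).2, (hb N').1, (hb N').2]
      · have h1 : (N'.card : ℝ) + 1 ≤ N.card := by exact_mod_cast h
        nlinarith [(hb N).1, (hb N).2, (hb N').1, (hb N').2]
    have hsums : ∑ i ∈ N, (2:ℝ)^(i:ℕ) = ∑ i ∈ N', (2:ℝ)^(i:ℕ) := by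
      rw [hcards] at heq2; linarith
    -- move to ℕ
    have hnat : ∑ i ∈ N.image Fin.val, 2^i = ∑ i ∈ N'.image Fin.val, 2^i := by
      have e : ∀ S : Finset (Fin (n-1)), ((∑ i ∈ S.image Fin.val, 2^i : ℕ) : ℝ)
          = ∑ i ∈ S, (2:ℝ)^(i:ℕ) := by
        intro S
        push_cast
        rw [Finset.sum_image (fun a _ b _ h => Fin.val_injective h)]
      exact_mod_cast (e N).trans (hsums.trans (e N').symm)
    have himg : N.image Fin.val = N'.image Fin.val :=
      Finset.geomSum_injective le_rfl hnat
    ext x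
    constructor <;> intro hx
    · have : (x:ℕ) ∈ N'.image Fin.val := himg ▸ Finset.mem_image_of_mem _ hx
      obtain ⟨y, hy, hxy⟩ := Finset.mem_image.1 this
      rwa [← Fin.val_injective hxy]
    · have : (x:ℕ) ∈ N.image Fin.val := himg ▸ Finset.mem_image_of_mem _ hx
      obtain ⟨y, hy, hxy⟩ := Finset.mem_image.1 this
      rwa [← Fin.val_injective hxy]
  · intro i
    have hi : (i:ℕ) < n - 1 := i.2
    have hile : (2:ℝ)^(i:ℕ) ≤ 2^(n-1) := by
      apply pow_le_pow_right₀ (by norm_num) (le_of_lt hi)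
    have hipos : (0:ℝ) < (2:ℝ)^(i:ℕ) := by positivity
    have hMi : (0:ℝ) < M + 2^(i:ℕ) := by linarith
    have hw : (0:ℝ) < (M + 2^(i:ℕ)) / D := div_pos hMi hD
    have hnpos : (0:ℝ) < (n:ℝ) := by linarith
    have ha : 1 / ((n:ℝ) * ((M + 2^(i:ℕ)) / D)) = D / ((n:ℝ) * (M + 2^(i:ℕ))) := by
      field_simp
    rw [ha]
    have hden : (0:ℝ) < (n:ℝ) * (M + 2^(i:ℕ)) := by positivity
    -- key: n*(M+2^i) - D = M + n*2^i - 2^(n-1) + 1 > 0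
    have hnum1 : (0:ℝ) < (n:ℝ) * (M + 2^(i:ℕ)) - D := by
      have : (n:ℝ) * (M + 2^(i:ℕ)) - D = M + (n:ℝ)*2^(i:ℕ) - 2^(n-1) + 1 := by
        rw [hDdef]; ring
      rw [this]
      nlinarith
    constructor
    · -- a/(n-2) > 1 - a  i.e. (n-1)*D > (n-2)*n*(M+2^i)
      have h2im : (n:ℝ)^2 * 2^(i:ℕ) ≤ M := by
        calc (n:ℝ)^2 * 2^(i:ℕ) ≤ (n:ℝ)^2 * 2^(n-1) := by
              apply mul_le_mul_of_nonneg_left hile (by positivity)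
          _ ≤ (n:ℝ)^2 * 2^n := by apply mul_le_mul_of_nonneg_left hpow (by positivity)
          _ = 2^n * (n:ℝ)^2 := by ring
          _ ≤ M := hM
      have f1 : (0:ℝ) ≤ ((n:ℝ)-1)*(2^(n-1)-1) := mul_nonneg (by linarith) (by linarith)
      have f2 : (0:ℝ) < 2*(n:ℝ)*2^(i:ℕ) := by positivity
      have expand : ((n:ℝ)-1)*D - ((n:ℝ)-2) * ((n:ℝ) * (M + 2^(i:ℕ)))
          = M + ((n:ℝ)-1)*(2^(n-1)-1) - (n:ℝ)^2*2^(i:ℕ) + 2*(n:ℝ)*2^(i:ℕ) := by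
        rw [hDdef]; ring
      have key : ((n:ℝ)-2) * ((n:ℝ) * (M + 2^(i:ℕ))) < ((n:ℝ)-1) * D := by
        linarith [h2im, f1, f2, expand]
      have hna : ((n:ℝ)-2) < ((n:ℝ)-1) * D / ((n:ℝ) * (M + 2^(i:ℕ))) :=
        (lt_div_iff₀ hden).mpr key
      rw [mul_div_assoc] at hna
      rw [gt_iff_lt, lt_div_iff₀ (by linarith : (0:ℝ) < (n:ℝ) - 2)]
      generalize hA : D / ((n:ℝ) * (M + 2^(i:ℕ))) = A at hna ⊢
      nlinarith [hna]
    · rw [gt_iff_lt, sub_pos, div_lt_one hden]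
      linarith
end
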